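/- arXiv:2205.11217 — 11 statements merged into one kernel-verified Lean document; each statement's English description precedes it below -/
import Mathlib

section
/- Let a, b, c be relatively prime positive integers all greater than 1, and let d > 2 be a positive divisor of c. If (x, y, z) is a solution in positive integers to a^x + b^y = c^z, then e_d(a) divides e_d(b)·x and e_d(b) divides e_d(a)·y. -/
/-!
Reducing modulo `d ∣ c` turns the equation into `a ^ x = -b ^ y` in `ZMod d`. Raising it to the
power `e_d(b)` makes `a ^ (e_d(b) x)` equal to `±1`, and every exponent `m` with `a ^ m = ±1` is a
multiple of `e_d(a)`, because the elements `±1` form a submonoid in which `u * v = ±1` and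
`u = ±1` force `v = ±1`. The second divisibility is symmetric.
-/

section Order

variable {M : Type*} [Monoid M]

theorem dvd_of_pow_mem_of_isLeast {S : Submonoid M}
    (hS : ∀ {u v : M}, u ∈ S → u * v ∈ S → v ∈ S) {A : M} {E m : ℕ}
    (hE : IsLeast {n : ℕ | 0 < n ∧ A ^ n ∈ S} E) (hm : A ^ m ∈ S) : E ∣ m := by
  obtain ⟨⟨hE_pos, hAE⟩, hE_min⟩ := hE
  have hsplit : A ^ m = (A ^ E) ^ (m / E) * A ^ (m % E) := by
    rw [← pow_mul, ← pow_add, Nat.div_add_mod]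
  have hrem : A ^ (m % E) ∈ S := hS (S.pow_mem hAE _) (hsplit ▸ hm)
  by_contra hndvd
  have hrem_pos : 0 < m % E := Nat.pos_of_ne_zero fun h => hndvd (Nat.dvd_of_mod_eq_zero h)
  exact absurd (hE_min ⟨hrem_pos, hrem⟩) (Nat.not_le.mpr (Nat.mod_lt m hE_pos))

end Order

section Signs

variable {R : Type*} [Monoid R] [HasDistribNeg R]

def signSubmonoid (R : Type*) [Monoid R] [HasDistribNeg R] : Submonoid R where
  carrier := {1, -1}
  one_mem' := Or.inl rfl
  mul_mem' := by
    rintro _ _ (rfl | rfl) (rfl | rfl) <;> simp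

theorem neg_one_mem_signSubmonoid : (-1 : R) ∈ signSubmonoid R := Or.inr rfl

theorem mem_signSubmonoid_of_mul_mem {u v : R} (hu : u ∈ signSubmonoid R)
    (huv : u * v ∈ signSubmonoid R) : v ∈ signSubmonoid R := by
  have hv : v = u * (u * v) := by
    rcases hu with rfl | rfl <;> simp
  exact hv ▸ (signSubmonoid R).mul_mem hu huv

theorem pow_mul_mem_signSubmonoid_of_pow_eq_neg {A B : R} {x y k : ℕ} (h : A ^ x = -B ^ y)
    (hk : B ^ k ∈ signSubmonoid R) : A ^ (k * x) ∈ signSubmonoid R := by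
  rw [mul_comm, pow_mul, h, neg_pow, ← pow_mul, mul_comm, pow_mul]
  exact Submonoid.mul_mem _ (Submonoid.pow_mem _ neg_one_mem_signSubmonoid _)
    (Submonoid.pow_mem _ hk _)

end Signs

theorem int_pow_modEq_one_or_neg_one_iff (a d n : ℕ) :
    ((a : ℤ) ^ n ≡ 1 [ZMOD (d : ℤ)] ∨ (a : ℤ) ^ n ≡ -1 [ZMOD (d : ℤ)]) ↔
      (a : ZMod d) ^ n ∈ signSubmonoid (ZMod d) := by
  rw [← ZMod.intCast_eq_intCast_iff, ← ZMod.intCast_eq_intCast_iff]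
  push_cast
  rfl

theorem dvd_of_pow_mem_signSubmonoid {a d E m : ℕ}
    (hE : IsLeast {n : ℕ | 0 < n ∧
      ((a : ℤ) ^ n ≡ 1 [ZMOD (d : ℤ)] ∨ (a : ℤ) ^ n ≡ -1 [ZMOD (d : ℤ)])} E)
    (hm : (a : ZMod d) ^ m ∈ signSubmonoid (ZMod d)) : E ∣ m := by
  simp only [int_pow_modEq_one_or_neg_one_iff] at hE
  exact dvd_of_pow_mem_of_isLeast mem_signSubmonoid_of_mul_mem hE hm

theorem stmt_4_general (a b c d : ℕ)
    (hd : d ∣ c) (Ea Eb : ℕ)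
    (hEa : IsLeast {n : ℕ | 0 < n ∧
      ((a : ℤ) ^ n ≡ 1 [ZMOD (d : ℤ)] ∨ (a : ℤ) ^ n ≡ -1 [ZMOD (d : ℤ)])} Ea)
    (hEb : IsLeast {n : ℕ | 0 < n ∧
      ((b : ℤ) ^ n ≡ 1 [ZMOD (d : ℤ)] ∨ (b : ℤ) ^ n ≡ -1 [ZMOD (d : ℤ)])} Eb)
    (x y z : ℕ) (hz : 0 < z)
    (heq : a ^ x + b ^ y = c ^ z) :
    Ea ∣ Eb * x ∧ Eb ∣ Ea * y := by
  have hsum : (a : ZMod d) ^ x + (b : ZMod d) ^ y = 0 := by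
    have hcz : ((c ^ z : ℕ) : ZMod d) = 0 := (ZMod.natCast_eq_zero_iff _ _).mpr (hd.pow hz.ne')
    exact_mod_cast heq ▸ hcz
  have hEa' := (int_pow_modEq_one_or_neg_one_iff a d Ea).mp hEa.1.2
  have hEb' := (int_pow_modEq_one_or_neg_one_iff b d Eb).mp hEb.1.2
  exact ⟨dvd_of_pow_mem_signSubmonoid hEa
      (pow_mul_mem_signSubmonoid_of_pow_eq_neg (eq_neg_of_add_eq_zero_left hsum) hEb'),
    dvd_of_pow_mem_signSubmonoid hEb
      (pow_mul_mem_signSubmonoid_of_pow_eq_neg (eq_neg_of_add_eq_zero_right hsum) hEa')⟩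

theorem stmt_4 (a b c d : ℕ) (ha : 1 < a) (hb : 1 < b) (hc : 1 < c)
    (hab : Nat.Coprime a b) (hac : Nat.Coprime a c) (hbc : Nat.Coprime b c)
    (hd : d ∣ c) (hd2 : 2 < d) (Ea Eb : ℕ)
    (hEa : IsLeast {n : ℕ | 0 < n ∧
      ((a : ℤ) ^ n ≡ 1 [ZMOD (d : ℤ)] ∨ (a : ℤ) ^ n ≡ -1 [ZMOD (d : ℤ)])} Ea)
    (hEb : IsLeast {n : ℕ | 0 < n ∧
      ((b : ℤ) ^ n ≡ 1 [ZMOD (d : ℤ)] ∨ (b : ℤ) ^ n ≡ -1 [ZMOD (d : ℤ)])} Eb)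
    (x y z : ℕ) (hx : 0 < x) (hy : 0 < y) (hz : 0 < z)
    (heq : a ^ x + b ^ y = c ^ z) :
    Ea ∣ Eb * x ∧ Eb ∣ Ea * y :=
  stmt_4_general a b c d hd Ea Eb hEa hEb x y z hz heq
end

section
/- Let a, b, c be pairwise coprime integers greater than 1, each of a and b congruent to ±1 modulo every prime factor of c. If (x,y,z) is a positive-integer solution of a^x + b^y = c^z (with z ≥ 2 when c = 2, and a ≡ ±1, b ≡ ±1 mod 4 when c is even), then gcd(x, y) = 1. -/
/-!
Suppose a prime `q` divides both `x` and `y`, and put `X = a ^ (x / q)`, `Y = b ^ (y / q)`, so that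
`X ^ q + Y ^ q = c ^ z`, with `X` and `Y` still `≡ ±1` modulo every prime divisor of `c`.

If `q = 2`, then `X ^ 2 + Y ^ 2 ≡ 2` modulo every prime divisor of `c`, so `X ^ 2 + Y ^ 2` is a
power of `2` greater than `2`; but it is `≡ 2 [MOD 4]` since `X` and `Y` are odd.

If `q` is odd, let `S = (X ^ q + Y ^ q) / (X + Y)`. A prime `p ∣ S` divides `c`, and as `±1` is
its own `q`-th power, `p ∣ X + Y`; then `S ≡ q * X ^ (q - 1)` modulo `p` forces `p = q`. By lifting
the exponent, `q` divides `S` exactly once, so `S = q`, which is too small: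
`X ^ q + Y ^ q > q * (X + Y)`.
-/

def PlusMinusOneModPrimeDivisors (c a : ℕ) : Prop :=
  ∀ p : ℕ, p.Prime → p ∣ c → (a : ZMod p) = 1 ∨ (a : ZMod p) = -1

section SignedUnit

variable {M : Type*} [Monoid M] [HasDistribNeg M] {r : M}

theorem pow_eq_self_of_eq_one_or_eq_neg_one (hr : r = 1 ∨ r = -1) {n : ℕ} (hn : Odd n) :
    r ^ n = r := by
  rcases hr with rfl | rfl
  · exact one_pow n
  · exact hn.neg_one_pow

theorem sq_eq_one_of_eq_one_or_eq_neg_one (hr : r = 1 ∨ r = -1) : r ^ 2 = 1 := by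
  rcases hr with rfl | rfl <;> simp

end SignedUnit

namespace PlusMinusOneModPrimeDivisors

variable {a c : ℕ}

theorem of_intModEq
    (h : ∀ p : ℕ, p.Prime → p ∣ c →
      ((a : ℤ) ≡ 1 [ZMOD (p : ℤ)] ∨ (a : ℤ) ≡ -1 [ZMOD (p : ℤ)])) :
    PlusMinusOneModPrimeDivisors c a := by
  intro p hp hpc
  simpa only [← ZMod.intCast_eq_intCast_iff, Int.cast_natCast, Int.cast_one, Int.cast_neg]
    using h p hp hpc

theorem pow (h : PlusMinusOneModPrimeDivisors c a) (n : ℕ) :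
    PlusMinusOneModPrimeDivisors c (a ^ n) := by
  intro p hp hpc
  push_cast
  rcases h p hp hpc with ha | ha <;> rw [ha]
  · exact .inl (one_pow n)
  · exact neg_one_pow_eq_or _ n

end PlusMinusOneModPrimeDivisors

theorem dvd_add_of_dvd_pow_add_pow {p q X Y : ℕ} (hX : (X : ZMod p) = 1 ∨ (X : ZMod p) = -1)
    (hY : (Y : ZMod p) = 1 ∨ (Y : ZMod p) = -1) (hq : Odd q) (h : p ∣ X ^ q + Y ^ q) :
    p ∣ X + Y := by
  rw [← ZMod.natCast_eq_zero_iff] at h ⊢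
  push_cast at h ⊢
  rwa [pow_eq_self_of_eq_one_or_eq_neg_one hX hq,
    pow_eq_self_of_eq_one_or_eq_neg_one hY hq] at h

theorem not_dvd_pow_add_pow_div_add {p q X Y : ℕ} (hp : p.Prime) (hq : Odd q) (hpq : ¬p ∣ q)
    (hXY : p ∣ X + Y) (hX : ¬p ∣ X) : ¬p ∣ (X ^ q + Y ^ q) / (X + Y) := by
  have hgeom := geom_sum₂_mul (X : ℤ) (-(Y : ℤ)) q
  rw [hq.neg_pow, sub_neg_eq_add, sub_neg_eq_add] at hgeom
  have hX0 : (X : ℤ) + Y ≠ 0 := by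
    have : X ≠ 0 := by rintro rfl; exact hX (dvd_zero p)
    positivity
  intro hdvd
  have hdvd' : (p : ℤ) ∣ ∑ i ∈ Finset.range q, (X : ℤ) ^ i * (-(Y : ℤ)) ^ (q - 1 - i) := by
    rw [← Int.ediv_eq_of_eq_mul_left hX0 hgeom.symm]
    exact_mod_cast hdvd
  refine not_dvd_geom_sum₂ (Nat.prime_iff_prime_int.mp hp) ?_ (by exact_mod_cast hX)
    (by exact_mod_cast hpq) hdvd'
  rw [sub_neg_eq_add]
  exact_mod_cast hXY

theorem mul_lt_pow {n x : ℕ} (hx : 2 ≤ x) (hn : 3 ≤ n) : n * x < x ^ n := by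
  induction n, hn using Nat.le_induction with
  | base => nlinarith [pow_succ x 2, Nat.mul_le_mul hx hx]
  | succ n hn ih =>
    rw [pow_succ]
    nlinarith [Nat.mul_le_mul_left (x ^ n) hx, Nat.mul_le_mul_right x (by omega : 1 ≤ n)]

theorem eq_prime_of_unique_prime_dvd_of_padicValNat_eq_one {n q : ℕ} (hq : q.Prime) (hn : n ≠ 0)
    (hdvd : ∀ {p : ℕ}, p.Prime → p ∣ n → p = q) (hval : padicValNat q n = 1) : n = q := by
  have : Fact q.Prime := ⟨hq⟩
  obtain ⟨k, hk⟩ : ∃ k, n = q ^ k := ⟨_, Nat.eq_prime_pow_of_unique_prime_dvd hn hdvd⟩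
  rw [hk, padicValNat.prime_pow] at hval
  rw [hk, hval, pow_one]

section PowAddPow

variable {q X Y c z : ℕ}

theorem sq_add_sq_ne_pow (hXc : X.Coprime c) (hYc : Y.Coprime c)
    (hXs : PlusMinusOneModPrimeDivisors c X) (hYs : PlusMinusOneModPrimeDivisors c Y)
    (hX : 2 ≤ X) : X ^ 2 + Y ^ 2 ≠ c ^ z := by
  intro h
  have hpow2 : ∀ {p : ℕ}, p.Prime → p ∣ X ^ 2 + Y ^ 2 → p = 2 := by
    intro p hp hpN
    have hpc : p ∣ c := hp.dvd_of_dvd_pow (h ▸ hpN)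
    have hp2 : p ∣ 2 := by
      rw [← ZMod.natCast_eq_zero_iff] at hpN ⊢
      push_cast at hpN ⊢
      rwa [sq_eq_one_of_eq_one_or_eq_neg_one (hXs p hp hpc),
        sq_eq_one_of_eq_one_or_eq_neg_one (hYs p hp hpc), one_add_one_eq_two] at hpN
    exact (Nat.prime_dvd_prime_iff_eq hp Nat.prime_two).mp hp2
  obtain ⟨k, hk⟩ : ∃ k, X ^ 2 + Y ^ 2 = 2 ^ k :=
    ⟨_, Nat.eq_prime_pow_of_unique_prime_dvd (by positivity) hpow2⟩
  have h4 : 4 ∣ X ^ 2 + Y ^ 2 := by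
    have hk2 : 2 ≤ k := by
      by_contra! hk2
      interval_cases k <;> nlinarith
    rw [hk]
    exact pow_dvd_pow 2 hk2
  have h2c : 2 ∣ c := Nat.prime_two.dvd_of_dvd_pow (h ▸ (dvd_trans (by norm_num) h4))
  obtain ⟨i, rfl⟩ := (hXc.coprime_dvd_right h2c).odd_of_right
  obtain ⟨j, rfl⟩ := (hYc.coprime_dvd_right h2c).odd_of_right
  ring_nf at h4
  omega

theorem pow_add_pow_ne_pow_of_odd_prime (hXc : X.Coprime c)
    (hXs : PlusMinusOneModPrimeDivisors c X) (hYs : PlusMinusOneModPrimeDivisors c Y)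
    (hq : q.Prime) (hq_odd : Odd q) (hX : 2 ≤ X) (hY : 2 ≤ Y) : X ^ q + Y ^ q ≠ c ^ z := by
  intro h
  set S := (X ^ q + Y ^ q) / (X + Y)
  have hmul : (X + Y) * S = X ^ q + Y ^ q :=
    Nat.mul_div_cancel' (hq_odd.nat_add_dvd_pow_add_pow X Y)
  have hdvd_c : ∀ {p : ℕ}, p.Prime → p ∣ S → p ∣ c := fun hp hpS =>
    hp.dvd_of_dvd_pow (h ▸ hmul ▸ dvd_mul_of_dvd_right hpS _)
  have hndvd_X : ∀ {p : ℕ}, p.Prime → p ∣ c → ¬p ∣ X := fun hp hpc hpX =>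
    hp.one_lt.ne' ((hXc.coprime_dvd_left hpX).eq_one_of_dvd hpc)
  have hprime : ∀ {p : ℕ}, p.Prime → p ∣ S → p = q ∧ p ∣ X + Y := by
    intro p hp hpS
    have hpc := hdvd_c hp hpS
    have hpXY : p ∣ X + Y := dvd_add_of_dvd_pow_add_pow (hXs p hp hpc) (hYs p hp hpc) hq_odd
      (hmul ▸ dvd_mul_of_dvd_right hpS _)
    have hpq : p ∣ q := by
      by_contra hpq
      exact not_dvd_pow_add_pow_div_add hp hq_odd hpq hpXY (hndvd_X hp hpc) hpS
    exact ⟨(Nat.prime_dvd_prime_iff_eq hp hq).mp hpq, hpXY⟩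
  have hS_gt : q < S := by
    have hq3 : 3 ≤ q := by
      obtain ⟨k, rfl⟩ := hq_odd
      have := hq.two_le
      omega
    have := mul_lt_pow hX hq3
    have := mul_lt_pow hY hq3
    by_contra! hS
    nlinarith [Nat.mul_le_mul_left (X + Y) hS]
  obtain ⟨p, hp, hpS⟩ := Nat.exists_prime_and_dvd (by linarith [hq.two_le] : S ≠ 1)
  have hqS : q ∣ S := (hprime hp hpS).1 ▸ hpS
  have hqXY : q ∣ X + Y := (hprime hp hpS).1 ▸ (hprime hp hpS).2
  have : Fact q.Prime := ⟨hq⟩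
  have hval : padicValNat q S = 1 := by
    have hlte := padicValNat.pow_add_pow hq_odd hqXY (hndvd_X hq (hdvd_c hq hqS)) hq_odd
    rw [← hmul, padicValNat.mul (by omega) (by omega), padicValNat.self hq.one_lt] at hlte
    omega
  exact hS_gt.ne' (eq_prime_of_unique_prime_dvd_of_padicValNat_eq_one hq (by omega)
    (fun hp hpS => (hprime hp hpS).1) hval)

theorem pow_add_pow_ne_pow_of_prime (hXc : X.Coprime c) (hYc : Y.Coprime c)
    (hXs : PlusMinusOneModPrimeDivisors c X) (hYs : PlusMinusOneModPrimeDivisors c Y)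
    (hq : q.Prime) (hX : 2 ≤ X) (hY : 2 ≤ Y) : X ^ q + Y ^ q ≠ c ^ z := by
  rcases hq.eq_two_or_odd' with rfl | hq_odd
  · exact sq_add_sq_ne_pow hXc hYc hXs hYs hX
  · exact pow_add_pow_ne_pow_of_odd_prime hXc hXs hYs hq hq_odd hX hY

end PowAddPow

theorem stmt_6_general (a b c : ℕ) (ha : 1 < a) (hb : 1 < b)
    (hac : Nat.Coprime a c) (hbc : Nat.Coprime b c)
    (hpa : ∀ p : ℕ, p.Prime → p ∣ c →
      ((a : ℤ) ≡ 1 [ZMOD (p : ℤ)] ∨ (a : ℤ) ≡ -1 [ZMOD (p : ℤ)]))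
    (hpb : ∀ p : ℕ, p.Prime → p ∣ c →
      ((b : ℤ) ≡ 1 [ZMOD (p : ℤ)] ∨ (b : ℤ) ≡ -1 [ZMOD (p : ℤ)]))
    (x y z : ℕ) (hx : 0 < x) (hy : 0 < y)
    (heq : a ^ x + b ^ y = c ^ z) :
    Nat.Coprime x y := by
  by_contra hxy
  obtain ⟨q, hq, hq_gcd⟩ := Nat.exists_prime_and_dvd hxy
  obtain ⟨x', rfl⟩ := hq_gcd.trans (Nat.gcd_dvd_left _ _)
  obtain ⟨y', rfl⟩ := hq_gcd.trans (Nat.gcd_dvd_right _ _)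
  rw [pow_mul', pow_mul'] at heq
  have hX : 2 ≤ a ^ x' := Nat.one_lt_pow (by rintro rfl; simp at hx) ha
  have hY : 2 ≤ b ^ y' := Nat.one_lt_pow (by rintro rfl; simp at hy) hb
  exact pow_add_pow_ne_pow_of_prime (hac.pow_left _) (hbc.pow_left _)
    ((PlusMinusOneModPrimeDivisors.of_intModEq hpa).pow _)
    ((PlusMinusOneModPrimeDivisors.of_intModEq hpb).pow _) hq hX hY heq

theorem stmt_6 (a b c : ℕ) (ha : 1 < a) (hb : 1 < b) (hc : 1 < c)
    (hab : Nat.Coprime a b) (hac : Nat.Coprime a c) (hbc : Nat.Coprime b c)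
    (hpa : ∀ p : ℕ, p.Prime → p ∣ c →
      ((a : ℤ) ≡ 1 [ZMOD (p : ℤ)] ∨ (a : ℤ) ≡ -1 [ZMOD (p : ℤ)]))
    (hpb : ∀ p : ℕ, p.Prime → p ∣ c →
      ((b : ℤ) ≡ 1 [ZMOD (p : ℤ)] ∨ (b : ℤ) ≡ -1 [ZMOD (p : ℤ)]))
    (h4 : Even c →
      (((a : ℤ) ≡ 1 [ZMOD 4] ∨ (a : ℤ) ≡ -1 [ZMOD 4]) ∧
       ((b : ℤ) ≡ 1 [ZMOD 4] ∨ (b : ℤ) ≡ -1 [ZMOD 4])))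
    (x y z : ℕ) (hx : 0 < x) (hy : 0 < y) (hz : 0 < z)
    (hz2 : c = 2 → 2 ≤ z)
    (heq : a ^ x + b ^ y = c ^ z) :
    Nat.Coprime x y :=
  stmt_6_general a b c ha hb hac hbc hpa hpb x y z hx hy heq
end

section
/- Let a, b, c be pairwise coprime integers greater than 1 with a ≡ δ_a and b ≡ δ_b modulo c' for signs δ_a, δ_b ∈ {1,-1} (c' = 4 if c = 2, c' = c otherwise). Suppose (x,y,z) and (X,Y,Z) are two positive-integer solutions of a^x + b^y = c^z and a^X + b^Y = c^Z with z ≤ Z (and z ≥ 2 if c = 2). Then a^Δ ≡ δ_a^Δ (mod C^z) and b^Δ ≡ δ_b^Δ (mod C^z), where Δ = |xY − Xy| and C = c if c = 2 or c ≢ 2 (mod 4), and C = c/2 if c > 2 and c ≡ 2 (mod 4). -/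
/-!
Raising `a ^ x = -b ^ y` to the power `Y` and `a ^ X = -b ^ Y` to the power `y` gives two
expressions for `b ^ (y * Y)` modulo `c ^ z`; as `a` is a unit there, `a ^ Δ ≡ (-1) ^ (y + Y)`.
The same computation in `ℤ` applies to the signs: since `c' > 2`, the relations
`δa ^ x + δb ^ y ≡ 0 (mod c')` force `δa ^ x = -δb ^ y`, hence `δa ^ Δ = (-1) ^ (y + Y)` as well.
Finally `C ∣ c`.
-/

section TwoSolutions

variable {R : Type*} [CommRing R] {a b : R} {x y X Y : ℕ}

theorem pow_eq_neg_one_pow_of_add_eq (ha : IsUnit a) (h₁ : a ^ x = -b ^ y) (h₂ : a ^ X = -b ^ Y)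
    {d : ℕ} (hd : X * y + d = x * Y) : a ^ d = (-1) ^ (y + Y) := by
  have hsq : ((-1 : R) ^ y) ^ 2 = 1 := by rw [← pow_mul, mul_comm, pow_mul, neg_one_sq, one_pow]
  refine (ha.pow (X * y)).mul_left_cancel ?_
  calc a ^ (X * y) * a ^ d = (a ^ x) ^ Y := by rw [← pow_add, hd, pow_mul]
    _ = ((-1) ^ y) ^ 2 * (-1) ^ Y * b ^ (y * Y) := by rw [h₁, neg_pow, hsq, one_mul, pow_mul]
    _ = (a ^ X) ^ y * (-1) ^ (y + Y) := by
      rw [h₂, neg_pow (b ^ Y), ← pow_mul b, mul_comm Y y]; ring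
    _ = a ^ (X * y) * (-1) ^ (y + Y) := by rw [pow_mul]

theorem pow_natAbs_eq_neg_one_pow (ha : IsUnit a) (h₁ : a ^ x = -b ^ y) (h₂ : a ^ X = -b ^ Y) :
    a ^ ((x : ℤ) * Y - (X : ℤ) * y).natAbs = (-1) ^ (y + Y) := by
  rw [show (x : ℤ) * Y - (X : ℤ) * y = ((x * Y : ℕ) : ℤ) - ((X * y : ℕ) : ℤ) by push_cast; rfl]
  rcases le_total (X * y) (x * Y) with hle | hle
  · exact pow_eq_neg_one_pow_of_add_eq ha h₁ h₂ (by omega)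
  · rw [add_comm]
    exact pow_eq_neg_one_pow_of_add_eq ha h₂ h₁ (by omega)

end TwoSolutions

theorem Int.add_eq_zero_of_dvd_of_isUnit {m u v : ℤ} (hm : 2 < m) (hu : IsUnit u)
    (hv : IsUnit v) (h : m ∣ u + v) : u + v = 0 := by
  refine Int.eq_zero_of_abs_lt_dvd h (lt_of_le_of_lt (abs_add_le u v) ?_)
  rw [Int.isUnit_iff_abs_eq.mp hu, Int.isUnit_iff_abs_eq.mp hv]
  omega

theorem Int.pow_eq_neg_pow_of_modEq {m a b δa δb : ℤ} (hm : 2 < m) (hδa : IsUnit δa)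
    (hδb : IsUnit δb) (ha : a ≡ δa [ZMOD m]) (hb : b ≡ δb [ZMOD m]) {x y : ℕ}
    (h : m ∣ a ^ x + b ^ y) : δa ^ x = -δb ^ y := by
  have hδ : m ∣ δa ^ x + δb ^ y := Int.modEq_zero_iff_dvd.mp
    (((ha.pow x).add (hb.pow y)).symm.trans (Int.modEq_zero_iff_dvd.mpr h))
  exact eq_neg_of_add_eq_zero_left (add_eq_zero_of_dvd_of_isUnit hm (hδa.pow x) (hδb.pow y) hδ)

theorem Int.pow_natAbs_modEq {n a b : ℕ} (han : a.Coprime n) {δa δb : ℤ} (hδa : IsUnit δa)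
    {x y X Y : ℕ} (h₁ : n ∣ a ^ x + b ^ y) (h₂ : n ∣ a ^ X + b ^ Y)
    (hδ₁ : δa ^ x = -δb ^ y) (hδ₂ : δa ^ X = -δb ^ Y) :
    (a : ℤ) ^ ((x : ℤ) * Y - (X : ℤ) * y).natAbs ≡ δa ^ ((x : ℤ) * Y - (X : ℤ) * y).natAbs
      [ZMOD n] := by
  have hsum : ∀ {u v : ℕ}, n ∣ a ^ u + b ^ v → (a : ZMod n) ^ u = -(b : ZMod n) ^ v := by
    intro u v h
    rw [← ZMod.natCast_eq_zero_iff] at h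
    push_cast at h
    exact eq_neg_of_add_eq_zero_left h
  rw [← ZMod.intCast_eq_intCast_iff]
  push_cast
  rw [pow_natAbs_eq_neg_one_pow ((ZMod.isUnit_iff_coprime a n).mpr han) (hsum h₁) (hsum h₂),
    ← Int.cast_pow, pow_natAbs_eq_neg_one_pow hδa hδ₁ hδ₂]
  push_cast
  rfl

theorem Int.pow_natAbs_modEq_of_two_solutions {n a b : ℕ} (han : a.Coprime n) (hbn : b.Coprime n)
    {δa δb : ℤ} (hδa : IsUnit δa) (hδb : IsUnit δb) {x y X Y : ℕ} (h₁ : n ∣ a ^ x + b ^ y)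
    (h₂ : n ∣ a ^ X + b ^ Y) (hδ₁ : δa ^ x = -δb ^ y) (hδ₂ : δa ^ X = -δb ^ Y) :
    (a : ℤ) ^ ((x : ℤ) * Y - (X : ℤ) * y).natAbs ≡ δa ^ ((x : ℤ) * Y - (X : ℤ) * y).natAbs
      [ZMOD n] ∧
    (b : ℤ) ^ ((x : ℤ) * Y - (X : ℤ) * y).natAbs ≡ δb ^ ((x : ℤ) * Y - (X : ℤ) * y).natAbs
      [ZMOD n] := by
  refine ⟨pow_natAbs_modEq han hδa h₁ h₂ hδ₁ hδ₂, ?_⟩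
  rw [← Int.natAbs_neg, neg_sub, mul_comm (X : ℤ), mul_comm (x : ℤ)]
  exact pow_natAbs_modEq hbn hδb (add_comm (a ^ x) _ ▸ h₁) (add_comm (a ^ X) _ ▸ h₂)
    (neg_eq_iff_eq_neg.mp hδ₁.symm) (neg_eq_iff_eq_neg.mp hδ₂.symm)

theorem Nat.ite_eq_two_four_dvd_pow {c z : ℕ} (hz : z ≠ 0) (hz2 : c = 2 → 2 ≤ z) :
    (if c = 2 then 4 else c) ∣ c ^ z := by
  split_ifs with h2
  · subst h2
    exact pow_dvd_pow 2 (hz2 rfl)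
  · exact dvd_pow_self c hz

theorem Nat.ite_mod_four_eq_two_div_two_dvd (c : ℕ) :
    (if 2 < c ∧ c % 4 = 2 then c / 2 else c) ∣ c := by
  split_ifs
  · exact Nat.div_dvd_of_dvd (by omega)
  · exact dvd_rfl

theorem stmt_8_general (a b c : ℕ) (hc : 1 < c)
    (hac : Nat.Coprime a c) (hbc : Nat.Coprime b c)
    (c' : ℕ) (hc' : c' = if c = 2 then 4 else c)
    (δa δb : ℤ) (hδa : δa = 1 ∨ δa = -1) (hδb : δb = 1 ∨ δb = -1)
    (hca : (a : ℤ) ≡ δa [ZMOD (c' : ℤ)]) (hcb : (b : ℤ) ≡ δb [ZMOD (c' : ℤ)])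
    (x y z X Y Z : ℕ) (hz : 0 < z) (hzZ : z ≤ Z)
    (hz2 : c = 2 → 2 ≤ z)
    (heq1 : a ^ x + b ^ y = c ^ z) (heq2 : a ^ X + b ^ Y = c ^ Z)
    (C : ℕ) (hC : C = if 2 < c ∧ c % 4 = 2 then c / 2 else c)
    (Δ : ℕ) (hΔ : Δ = ((x : ℤ) * Y - (X : ℤ) * y).natAbs) :
    (a : ℤ) ^ Δ ≡ δa ^ Δ [ZMOD ((C : ℤ) ^ z)] ∧
    (b : ℤ) ^ Δ ≡ δb ^ Δ [ZMOD ((C : ℤ) ^ z)] := by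
  have hc'z : c' ∣ c ^ z := hc' ▸ Nat.ite_eq_two_four_dvd_pow hz.ne' hz2
  have hc'2 : (2 : ℤ) < c' := by rw [hc']; split_ifs <;> omega
  have hδa' : IsUnit δa := Int.isUnit_iff.mpr hδa
  have hδb' : IsUnit δb := Int.isUnit_iff.mpr hδb
  have hsign : ∀ {u v w : ℕ}, z ≤ w → a ^ u + b ^ v = c ^ w → δa ^ u = -δb ^ v :=
    fun hw heq => Int.pow_eq_neg_pow_of_modEq hc'2 hδa' hδb' hca hcb
      (by exact_mod_cast heq ▸ hc'z.trans (pow_dvd_pow c hw))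
  have hCz : (C : ℤ) ^ z ∣ (c : ℤ) ^ z := pow_dvd_pow_of_dvd
    (Int.natCast_dvd_natCast.mpr (hC ▸ Nat.ite_mod_four_eq_two_div_two_dvd c)) z
  obtain ⟨hA, hB⟩ := Int.pow_natAbs_modEq_of_two_solutions (hac.pow_right z) (hbc.pow_right z)
    hδa' hδb' (heq1 ▸ dvd_rfl) (heq2 ▸ pow_dvd_pow c hzZ) (hsign le_rfl heq1) (hsign hzZ heq2)
  rw [← hΔ, Nat.cast_pow] at hA hB
  exact ⟨hA.of_dvd hCz, hB.of_dvd hCz⟩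

theorem stmt_8 (a b c : ℕ) (ha : 1 < a) (hb : 1 < b) (hc : 1 < c)
    (hab : Nat.Coprime a b) (hac : Nat.Coprime a c) (hbc : Nat.Coprime b c)
    (c' : ℕ) (hc' : c' = if c = 2 then 4 else c)
    (δa δb : ℤ) (hδa : δa = 1 ∨ δa = -1) (hδb : δb = 1 ∨ δb = -1)
    (hca : (a : ℤ) ≡ δa [ZMOD (c' : ℤ)]) (hcb : (b : ℤ) ≡ δb [ZMOD (c' : ℤ)])
    (x y z X Y Z : ℕ) (hx : 0 < x) (hy : 0 < y) (hz : 0 < z)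
    (hX : 0 < X) (hY : 0 < Y) (hZ : 0 < Z) (hzZ : z ≤ Z)
    (hz2 : c = 2 → 2 ≤ z)
    (heq1 : a ^ x + b ^ y = c ^ z) (heq2 : a ^ X + b ^ Y = c ^ Z)
    (C : ℕ) (hC : C = if 2 < c ∧ c % 4 = 2 then c / 2 else c)
    (Δ : ℕ) (hΔ : Δ = ((x : ℤ) * Y - (X : ℤ) * y).natAbs) :
    (a : ℤ) ^ Δ ≡ δa ^ Δ [ZMOD ((C : ℤ) ^ z)] ∧
    (b : ℤ) ^ Δ ≡ δb ^ Δ [ZMOD ((C : ℤ) ^ z)] :=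
  stmt_8_general a b c hc hac hbc c' hc' δa δb hδa hδb hca hcb x y z X Y Z hz hzZ hz2 heq1 heq2 C hC
    Δ hΔ
end

section
/- Under the same hypotheses as the congruence a^Δ ≡ δ_a^Δ, b^Δ ≡ δ_b^Δ (mod C^z): if additionally Δ ≠ 0, then C^z divides gcd(a − δ_a, b − δ_b)·Δ. -/
/-!
Reducing the two equations modulo `c ^ z` and eliminating `b` gives `a ^ Δ ≡ ±1 (mod c ^ z)`;
since `a ≡ δ_a` modulo `c' ≥ 3` and `c' ∣ c ^ z`, the sign is `δ_a ^ Δ`. Every prime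
`p ∣ C` divides `a - δ_a`, and `4 ∣ a - δ_a` when `p = 2`, so the lifting-the-exponent lemma gives
`v_p (a ^ Δ - δ_a ^ Δ) = v_p ((a - δ_a) Δ)`. Hence `C ^ z ∣ (a - δ_a) Δ`, likewise for `b`,
and `gcd (a - δ_a) (b - δ_b) * Δ` is the gcd of these two products.
-/

theorem Int.emultiplicity_pow_sub_pow_eq_emultiplicity_mul {p : ℕ} (hp : p.Prime) {x y : ℤ}
    (hxy : (p : ℤ) ∣ x - y) (hx : ¬(p : ℤ) ∣ x) (h4 : p = 2 → 4 ∣ x - y) (n : ℕ) :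
    emultiplicity (p : ℤ) (x ^ n - y ^ n) = emultiplicity (p : ℤ) ((x - y) * n) := by
  rw [emultiplicity_mul (Nat.prime_iff_prime_int.mp hp)]
  rcases hp.eq_two_or_odd' with rfl | hodd
  · exact_mod_cast Int.two_pow_sub_pow' n (h4 rfl) hx
  · rw [Int.emultiplicity_pow_sub_pow hp hodd hxy hx, Int.natCast_emultiplicity]

theorem Int.pow_dvd_sub_mul_of_pow_dvd_pow_sub_pow {r k n : ℕ} {x y : ℤ}
    (hrxy : (r : ℤ) ∣ x - y) (hx : IsCoprime x r) (h4 : 2 ∣ r → 4 ∣ x - y)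
    (h : (r : ℤ) ^ k ∣ x ^ n - y ^ n) : (r : ℤ) ^ k ∣ (x - y) * n := by
  rw [← Nat.cast_pow, Int.natCast_dvd] at h ⊢
  refine (Nat.dvd_iff_prime_pow_dvd_dvd _ _).mpr fun p j hp hpj => ?_
  rcases j.eq_zero_or_pos with rfl | hj
  · simp
  have hpr : p ∣ r := hp.dvd_of_dvd_pow ((dvd_pow_self p hj.ne').trans hpj)
  have hpr' : (p : ℤ) ∣ r := Int.natCast_dvd_natCast.mpr hpr
  have hpx : ¬(p : ℤ) ∣ x := fun hpx =>
    (Nat.prime_iff_prime_int.mp hp).not_isUnit (hx.isUnit_of_dvd' hpx hpr')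
  have hLTE := Int.emultiplicity_pow_sub_pow_eq_emultiplicity_mul hp (hpr'.trans hrxy) hpx
    (fun hp2 => h4 (hp2 ▸ hpr)) n
  rw [pow_dvd_iff_le_emultiplicity, Int.emultiplicity_natAbs, ← hLTE,
    ← Int.emultiplicity_natAbs, ← pow_dvd_iff_le_emultiplicity]
  exact hpj.trans h

theorem Int.eq_of_isUnit_of_modEq {u v n : ℤ} (hu : IsUnit u) (hv : IsUnit v) (hn : 2 < n)
    (h : u ≡ v [ZMOD n]) : u = v := by
  by_contra hne
  have h2 : (v - u).natAbs = 2 := by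
    rcases Int.isUnit_iff.mp hu with rfl | rfl <;> rcases Int.isUnit_iff.mp hv with rfl | rfl <;>
      simp_all
  have := Nat.le_of_dvd two_pos (h2 ▸ Int.natAbs_dvd_natAbs.mpr (Int.modEq_iff_dvd.mp h))
  omega

theorem pow_natAbs_sub_eq_neg_one_pow {R : Type*} [CommRing R] {A B : R} (hA : IsUnit A)
    {x y X Y : ℕ} (h1 : A ^ x = -B ^ y) (h2 : A ^ X = -B ^ Y) :
    A ^ ((x : ℤ) * Y - X * y).natAbs = (-1) ^ (y + Y) := by
  -- both sides equal `(-1) ^ (y + Y) * B ^ (y * Y)`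
  have key : (-1) ^ y * A ^ (x * Y) = (-1) ^ Y * A ^ (X * y) := by
    rw [pow_mul, pow_mul, h1, h2]
    ring
  wlog h : X * y ≤ x * Y generalizing x y X Y
  · rw [← Int.natAbs_neg, neg_sub, add_comm]
    exact this h2 h1 key.symm (by omega)
  obtain ⟨d, hd⟩ := Nat.exists_eq_add_of_le h
  have hd' : ((x : ℤ) * Y - X * y).natAbs = d := by zify at hd; omega
  rw [hd']
  rw [hd, pow_add] at key
  have hcancel : (-1) ^ y * A ^ d = (-1) ^ Y :=
    (hA.pow (X * y)).mul_right_cancel (by rw [← key]; ring)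
  calc A ^ d = (-1) ^ y * (-1) ^ y * A ^ d := by
        rw [← pow_add, Even.neg_one_pow ⟨y, rfl⟩, one_mul]
    _ = (-1) ^ (y + Y) := by rw [mul_assoc, hcancel, pow_add]

theorem pow_dvd_pow_natAbs_sub_neg_one_pow {a b c x y z X Y Z : ℕ} (hac : a.Coprime c)
    (hzZ : z ≤ Z) (h1 : a ^ x + b ^ y = c ^ z) (h2 : a ^ X + b ^ Y = c ^ Z) :
    (c : ℤ) ^ z ∣ (a : ℤ) ^ ((x : ℤ) * Y - X * y).natAbs - (-1) ^ (y + Y) := by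
  have hA : IsUnit (a : ZMod (c ^ z)) := (ZMod.isUnit_iff_coprime _ _).mpr (hac.pow_right z)
  have e1 : ((a ^ x + b ^ y : ℕ) : ZMod (c ^ z)) = 0 := by rw [h1, ZMod.natCast_self]
  have e2 : ((a ^ X + b ^ Y : ℕ) : ZMod (c ^ z)) = 0 := by
    rw [h2, ZMod.natCast_eq_zero_iff]
    exact pow_dvd_pow c hzZ
  push_cast at e1 e2
  have hpow := pow_natAbs_sub_eq_neg_one_pow hA (eq_neg_of_add_eq_zero_left e1)
    (eq_neg_of_add_eq_zero_left e2)
  rw [← Nat.cast_pow, ← ZMod.intCast_zmod_eq_zero_iff_dvd]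
  push_cast
  rw [hpow, sub_self]

section Moduli

variable {c c' C z : ℕ}

theorem two_lt_modulus (hc : 1 < c) (hc' : c' = if c = 2 then 4 else c) : 2 < c' := by
  split at hc' <;> omega

theorem modulus_dvd_pow (hz : 0 < z) (hz2 : c = 2 → 2 ≤ z)
    (hc' : c' = if c = 2 then 4 else c) : c' ∣ c ^ z := by
  split at hc'
  · subst_vars
    exact pow_dvd_pow 2 (hz2 rfl)
  · exact hc' ▸ dvd_pow_self c hz.ne'

theorem reduced_dvd (hC : C = if 2 < c ∧ c % 4 = 2 then c / 2 else c) : C ∣ c := by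
  split at hC
  · exact ⟨2, by omega⟩
  · exact hC ▸ dvd_rfl

theorem reduced_dvd_modulus (hc' : c' = if c = 2 then 4 else c)
    (hC : C = if 2 < c ∧ c % 4 = 2 then c / 2 else c) : C ∣ c' := by
  split at hc'
  · subst_vars
    exact ⟨2, rfl⟩
  · exact hc' ▸ reduced_dvd hC

theorem four_dvd_modulus (hc' : c' = if c = 2 then 4 else c)
    (hC : C = if 2 < c ∧ c % 4 = 2 then c / 2 else c) (h2 : 2 ∣ C) : 4 ∣ c' := by
  split at hc' <;> split at hC <;> omega

end Moduli

theorem reduced_pow_dvd_sub_mul {a c c' C z Δ : ℕ} {δ ε : ℤ} (hc : 1 < c) (hz : 0 < z)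
    (hz2 : c = 2 → 2 ≤ z) (hc' : c' = if c = 2 then 4 else c)
    (hC : C = if 2 < c ∧ c % 4 = 2 then c / 2 else c) (hac : a.Coprime c)
    (hδ : IsUnit δ) (hε : IsUnit ε) (hca : (a : ℤ) ≡ δ [ZMOD c'])
    (h : (c : ℤ) ^ z ∣ (a : ℤ) ^ Δ - ε) : (C : ℤ) ^ z ∣ ((a : ℤ) - δ) * Δ := by
  have hc'c : (c' : ℤ) ∣ (c : ℤ) ^ z := by exact_mod_cast modulus_dvd_pow hz hz2 hc'
  have hsign : ε = δ ^ Δ := Int.eq_of_isUnit_of_modEq hε (hδ.pow Δ)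
    (by exact_mod_cast two_lt_modulus hc hc')
    (((Int.modEq_iff_dvd.mpr h).of_dvd hc'c).trans (hca.pow Δ))
  subst hsign
  have hCc' : (C : ℤ) ∣ c' := Int.natCast_dvd_natCast.mpr (reduced_dvd_modulus hc' hC)
  refine Int.pow_dvd_sub_mul_of_pow_dvd_pow_sub_pow (hCc'.trans hca.symm.dvd)
    (Nat.isCoprime_iff_coprime.mpr (hac.coprime_dvd_right (reduced_dvd hC)))
    (fun h2 => (Int.natCast_dvd_natCast.mpr (four_dvd_modulus hc' hC h2)).trans hca.symm.dvd)
    ((pow_dvd_pow_of_dvd (Int.natCast_dvd_natCast.mpr (reduced_dvd hC)) z).trans h)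

theorem stmt_9_general (a b c : ℕ) (hc : 1 < c)
    (hac : Nat.Coprime a c) (hbc : Nat.Coprime b c)
    (c' : ℕ) (hc' : c' = if c = 2 then 4 else c)
    (δa δb : ℤ) (hδa : δa = 1 ∨ δa = -1) (hδb : δb = 1 ∨ δb = -1)
    (hca : (a : ℤ) ≡ δa [ZMOD (c' : ℤ)]) (hcb : (b : ℤ) ≡ δb [ZMOD (c' : ℤ)])
    (x y z X Y Z : ℕ) (hz : 0 < z) (hzZ : z ≤ Z) (hz2 : c = 2 → 2 ≤ z)
    (heq1 : a ^ x + b ^ y = c ^ z) (heq2 : a ^ X + b ^ Y = c ^ Z)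
    (C : ℕ) (hC : C = if 2 < c ∧ c % 4 = 2 then c / 2 else c)
    (Δ : ℕ) (hΔ : Δ = ((x : ℤ) * Y - (X : ℤ) * y).natAbs) :
    (C : ℤ) ^ z ∣ (Int.gcd ((a : ℤ) - δa) ((b : ℤ) - δb) : ℤ) * (Δ : ℤ) := by
  have hΔb : ((y : ℤ) * X - Y * x).natAbs = Δ := by
    rw [hΔ, ← Int.natAbs_neg]
    ring_nf
  have hpa := pow_dvd_pow_natAbs_sub_neg_one_pow hac hzZ heq1 heq2
  have hpb := pow_dvd_pow_natAbs_sub_neg_one_pow hbc hzZ ((add_comm _ _).trans heq1)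
    ((add_comm _ _).trans heq2)
  rw [← hΔ] at hpa
  rw [hΔb] at hpb
  have hgcd : (Int.gcd ((a : ℤ) - δa) ((b : ℤ) - δb) : ℤ) * Δ
      = Int.gcd (((a : ℤ) - δa) * Δ) (((b : ℤ) - δb) * Δ) := by
    rw [Int.gcd_mul_right, Int.natAbs_natCast, Nat.cast_mul]
  rw [hgcd]
  exact Int.dvd_coe_gcd
    (reduced_pow_dvd_sub_mul hc hz hz2 hc' hC hac (Int.isUnit_iff.mpr hδa)
      ((isUnit_neg_one (α := ℤ)).pow _) hca hpa)
    (reduced_pow_dvd_sub_mul hc hz hz2 hc' hC hbc (Int.isUnit_iff.mpr hδb)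
      ((isUnit_neg_one (α := ℤ)).pow _) hcb hpb)

theorem stmt_9 (a b c : ℕ) (ha : 1 < a) (hb : 1 < b) (hc : 1 < c)
    (hab : Nat.Coprime a b) (hac : Nat.Coprime a c) (hbc : Nat.Coprime b c)
    (c' : ℕ) (hc' : c' = if c = 2 then 4 else c)
    (δa δb : ℤ) (hδa : δa = 1 ∨ δa = -1) (hδb : δb = 1 ∨ δb = -1)
    (hca : (a : ℤ) ≡ δa [ZMOD (c' : ℤ)]) (hcb : (b : ℤ) ≡ δb [ZMOD (c' : ℤ)])
    (x y z X Y Z : ℕ) (hx : 0 < x) (hy : 0 < y) (hz : 0 < z)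
    (hX : 0 < X) (hY : 0 < Y) (hZ : 0 < Z) (hzZ : z ≤ Z)
    (hz2 : c = 2 → 2 ≤ z)
    (heq1 : a ^ x + b ^ y = c ^ z) (heq2 : a ^ X + b ^ Y = c ^ Z)
    (C : ℕ) (hC : C = if 2 < c ∧ c % 4 = 2 then c / 2 else c)
    (Δ : ℕ) (hΔ : Δ = ((x : ℤ) * Y - (X : ℤ) * y).natAbs) (hΔ0 : Δ ≠ 0) :
    (C : ℤ) ^ z ∣ (Int.gcd ((a : ℤ) - δa) ((b : ℤ) - δb) : ℤ) * (Δ : ℤ) :=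
  stmt_9_general a b c hc hac hbc c' hc' δa δb hδa hδb hca hcb x y z X Y Z hz hzZ hz2 heq1 heq2 C hC
    Δ hΔ
end

section
/- Let a, b, c be pairwise coprime integers greater than 1 with c even, and suppose (x,y,z) and (X,Y,Z) are two positive-integer solutions of a^x + b^y = c^z with z ≤ Z and Δ := |xY − Xy| ≠ 0. Then (c[2])^z divides gcd(a − δ_{a,4}, b − δ_{b,4}) · Δ, where c[2] = 2^{ν_2(c)} is the 2-part of c, and δ_{a,4}, δ_{b,4} ∈ {1,-1} are determined by a ≡ δ_{a,4} (mod 4), b ≡ δ_{b,4} (mod 4). -/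
/-!
Let `M = c[2]^z`; it divides both `c^z` and `c^Z`, so modulo `M` we have `a^x ≡ -b^y` and
`a^X ≡ -b^Y`. Raising to the powers `Y` and `y` and cancelling the unit `a` gives
`a^Δ ≡ ±1 (mod M)`, and likewise `b^Δ ≡ ±1`. For `u = δ_{a,4} a ≡ 1 (mod 4)`, lifting the
exponent gives `ν₂(u^Δ - 1) = ν₂(u - 1) + ν₂(Δ)`, while `u^Δ + 1 ≡ 2 (mod 4)`; either way
`M ∣ (a - δ_{a,4}) Δ`, and similarly `M ∣ (b - δ_{b,4}) Δ`.
-/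

theorem pow_natAbs_sub_eq_of_pow_eq_mul_pow {M : Type*} [CommMonoid M] {A s : M}
    (hA : IsUnit A) (hs : s * s = 1) {p q : ℕ} (h : A ^ p = s * A ^ q) :
    A ^ ((p : ℤ) - q).natAbs = s := by
  wlog hqp : q ≤ p generalizing p q
  · have h' : A ^ q = s * A ^ p := by rw [h, ← mul_assoc, hs, one_mul]
    rw [← Int.natAbs_neg, neg_sub]
    exact this h' (by omega)
  rw [show ((p : ℤ) - q).natAbs = p - q by omega]
  refine (hA.pow q).mul_left_cancel ?_
  rw [← pow_add, Nat.add_sub_cancel' hqp, h, mul_comm]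

theorem pow_natAbs_eq_neg_one_pow_of_pow_add_pow_eq_zero {R : Type*} [CommRing R] {A B : R}
    (hA : IsUnit A) {x y X Y : ℕ} (h₁ : A ^ x + B ^ y = 0) (h₂ : A ^ X + B ^ Y = 0) :
    A ^ ((x * Y : ℕ) - (X * y : ℕ) : ℤ).natAbs = (-1) ^ (y + Y) := by
  have hsign : ((-1 : R) ^ (y + Y)) * (-1) ^ (y + Y) = 1 := by
    rw [← pow_add, ← two_mul, pow_mul, neg_one_sq, one_pow]
  refine pow_natAbs_sub_eq_of_pow_eq_mul_pow hA hsign ?_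
  have e₁ : A ^ (x * Y) = (-1) ^ Y * B ^ (y * Y) := by
    rw [pow_mul, eq_neg_of_add_eq_zero_left h₁, neg_pow, pow_mul]
  have e₂ : A ^ (X * y) = (-1) ^ y * B ^ (y * Y) := by
    rw [pow_mul, eq_neg_of_add_eq_zero_left h₂, neg_pow, ← pow_mul, mul_comm Y y]
  rw [e₁, e₂, ← mul_assoc, ← pow_add, show y + Y + y = Y + 2 * y by ring, pow_add,
    (even_two_mul y).neg_one_pow, mul_one]

theorem two_pow_dvd_sub_one_mul_of_dvd_pow_sub_one {u : ℤ} (hu : u ≡ 1 [ZMOD 4]) {m n : ℕ}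
    (h : 2 ^ m ∣ u ^ n - 1) : 2 ^ m ∣ (u - 1) * n := by
  have hu4 : 4 ∣ u - 1 := hu.symm.dvd
  have hodd : ¬ 2 ∣ u := fun h2 => by omega
  rw [pow_dvd_iff_le_emultiplicity] at h ⊢
  rwa [emultiplicity_mul Int.prime_two, ← Int.two_pow_sub_pow' n hu4 hodd, one_pow]

theorem two_pow_dvd_sub_one_of_pow_modEq_neg_one {u : ℤ} (hu : u ≡ 1 [ZMOD 4]) {m n : ℕ}
    (h : u ^ n ≡ -1 [ZMOD 2 ^ m]) : 2 ^ m ∣ u - 1 := by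
  have hm : m ≤ 1 := by
    by_contra! hm
    have h4 : u ^ n ≡ -1 [ZMOD 4] :=
      h.of_dvd ((by norm_num : (4 : ℤ) ∣ 2 ^ 2).trans (pow_dvd_pow 2 hm))
    have := (hu.pow n).symm.trans h4
    simp [Int.ModEq] at this
  exact (pow_dvd_pow 2 hm).trans ((by norm_num : (2 : ℤ) ∣ 4).trans hu.symm.dvd)

theorem two_pow_dvd_sub_one_mul_of_pow_modEq {u ε : ℤ} (hu : u ≡ 1 [ZMOD 4]) (hε : IsUnit ε)
    {m n : ℕ} (h : u ^ n ≡ ε [ZMOD 2 ^ m]) : 2 ^ m ∣ (u - 1) * n := by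
  rcases Int.isUnit_iff.mp hε with rfl | rfl
  · exact two_pow_dvd_sub_one_mul_of_dvd_pow_sub_one hu h.symm.dvd
  · exact (two_pow_dvd_sub_one_of_pow_modEq_neg_one hu h).mul_right _

theorem two_pow_dvd_sub_mul_of_pow_modEq {a δ ε : ℤ} (hδ : IsUnit δ) (hε : IsUnit ε)
    (ha : a ≡ δ [ZMOD 4]) {m n : ℕ} (h : a ^ n ≡ ε [ZMOD 2 ^ m]) :
    2 ^ m ∣ (a - δ) * n := by
  have hδδ := Int.isUnit_mul_self hδ
  have hu : δ * a ≡ 1 [ZMOD 4] := hδδ ▸ ha.mul_left δ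
  have hun : (δ * a) ^ n ≡ δ ^ n * ε [ZMOD 2 ^ m] := by rw [mul_pow]; exact h.mul_left _
  have := two_pow_dvd_sub_one_mul_of_pow_modEq hu ((hδ.pow n).mul hε) hun
  rw [show (a - δ) * n = δ * ((δ * a - 1) * n) by linear_combination (-(a * n)) * hδδ]
  exact this.mul_left δ

theorem natCast_pow_natAbs_modEq_neg_one_pow {a b M x y X Y : ℕ} (ha : a.Coprime M)
    (h₁ : M ∣ a ^ x + b ^ y) (h₂ : M ∣ a ^ X + b ^ Y) :
    (a : ℤ) ^ ((x : ℤ) * Y - X * y).natAbs ≡ (-1) ^ (y + Y) [ZMOD M] := by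
  rw [← ZMod.intCast_eq_intCast_iff]
  rw [← ZMod.natCast_eq_zero_iff] at h₁ h₂
  push_cast at h₁ h₂ ⊢
  exact_mod_cast pow_natAbs_eq_neg_one_pow_of_pow_add_pow_eq_zero
    ((ZMod.isUnit_iff_coprime a M).mpr ha) h₁ h₂

theorem stmt_10_general (a b c : ℕ)
    (hac : Nat.Coprime a c) (hbc : Nat.Coprime b c)
    (δa4 δb4 : ℤ) (hδa4 : δa4 = 1 ∨ δa4 = -1) (hδb4 : δb4 = 1 ∨ δb4 = -1)
    (hca : (a : ℤ) ≡ δa4 [ZMOD 4]) (hcb : (b : ℤ) ≡ δb4 [ZMOD 4])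
    (x y z X Y Z : ℕ) (hzZ : z ≤ Z)
    (heq1 : a ^ x + b ^ y = c ^ z) (heq2 : a ^ X + b ^ Y = c ^ Z)
    (Δ : ℕ) (hΔ : Δ = ((x : ℤ) * Y - (X : ℤ) * y).natAbs) :
    ((2 ^ padicValNat 2 c : ℕ) : ℤ) ^ z ∣
      (Int.gcd ((a : ℤ) - δa4) ((b : ℤ) - δb4) : ℤ) * (Δ : ℤ) := by
  have hMz : (2 ^ padicValNat 2 c) ^ z ∣ c ^ z := pow_dvd_pow_of_dvd pow_padicValNat_dvd z
  have hMZ : (2 ^ padicValNat 2 c) ^ z ∣ c ^ Z := hMz.trans (pow_dvd_pow c hzZ)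
  have hcopM {p : ℕ} (hp : p.Coprime c) : p.Coprime ((2 ^ padicValNat 2 c) ^ z) :=
    (hp.coprime_dvd_right pow_padicValNat_dvd).pow_right z
  have hA : 2 ^ (padicValNat 2 c * z) ∣ ((a : ℤ) - δa4) * Δ := by
    refine two_pow_dvd_sub_mul_of_pow_modEq (Int.isUnit_iff.mpr hδa4)
      (isUnit_neg_one.pow (y + Y)) hca ?_
    rw [pow_mul, hΔ]
    exact_mod_cast natCast_pow_natAbs_modEq_neg_one_pow (hcopM hac) (heq1 ▸ hMz) (heq2 ▸ hMZ)
  have hB : 2 ^ (padicValNat 2 c * z) ∣ ((b : ℤ) - δb4) * Δ := by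
    refine two_pow_dvd_sub_mul_of_pow_modEq (Int.isUnit_iff.mpr hδb4)
      (isUnit_neg_one.pow (x + X)) hcb ?_
    rw [pow_mul, show Δ = ((y : ℤ) * X - Y * x).natAbs by rw [hΔ, ← Int.natAbs_neg]; ring_nf]
    exact_mod_cast natCast_pow_natAbs_modEq_neg_one_pow (hcopM hbc)
      (by rwa [add_comm, heq1]) (by rwa [add_comm, heq2])
  have hgcd := Int.dvd_coe_gcd hA hB
  rwa [Int.gcd_mul_right, Int.natAbs_natCast, pow_mul] at hgcd

theorem stmt_10 (a b c : ℕ) (ha : 1 < a) (hb : 1 < b) (hc : 1 < c)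
    (hab : Nat.Coprime a b) (hac : Nat.Coprime a c) (hbc : Nat.Coprime b c)
    (hceven : Even c)
    (δa4 δb4 : ℤ) (hδa4 : δa4 = 1 ∨ δa4 = -1) (hδb4 : δb4 = 1 ∨ δb4 = -1)
    (hca : (a : ℤ) ≡ δa4 [ZMOD 4]) (hcb : (b : ℤ) ≡ δb4 [ZMOD 4])
    (x y z X Y Z : ℕ) (hx : 0 < x) (hy : 0 < y) (hz : 0 < z)
    (hX : 0 < X) (hY : 0 < Y) (hZ : 0 < Z) (hzZ : z ≤ Z)
    (heq1 : a ^ x + b ^ y = c ^ z) (heq2 : a ^ X + b ^ Y = c ^ Z)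
    (Δ : ℕ) (hΔ : Δ = ((x : ℤ) * Y - (X : ℤ) * y).natAbs) (hΔ0 : Δ ≠ 0) :
    ((2 ^ padicValNat 2 c : ℕ) : ℤ) ^ z ∣
      (Int.gcd ((a : ℤ) - δa4) ((b : ℤ) - δb4) : ℤ) * (Δ : ℤ) :=
  stmt_10_general a b c hac hbc δa4 δb4 hδa4 hδb4 hca hcb x y z X Y Z hzZ heq1 heq2 Δ hΔ
end

section
/- Let b, c be coprime integers greater than 1 and z < Z positive integers satisfying b^Y − b = c^Z − c^z for some integer Y ≥ 3 with Y = 3, where additionally 2z > Z. Writing b^2 = 1 + K·c^z with K a positive integer, we have b·K = c^{Z−z} − 1 and K^2 ≡ 1 (mod c^{Z−z}). -/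
theorem Nat.mul_eq_of_sq_eq_one_add_mul {b K m n : ℕ} (hm : 0 < m) (hK : b ^ 2 = 1 + K * m)
    (h : b * (b ^ 2 - 1) = m * n) : b * K = n := by
  rw [hK, Nat.add_sub_cancel_left, ← mul_assoc, mul_comm] at h
  exact Nat.eq_of_mul_eq_mul_left hm h

theorem Int.sq_modEq_one_of_mul_modEq_neg_one {b K n : ℤ} (hb : b ^ 2 ≡ 1 [ZMOD n])
    (hbK : b * K ≡ -1 [ZMOD n]) : K ^ 2 ≡ 1 [ZMOD n] :=
  calc K ^ 2 = 1 * K ^ 2 := (one_mul _).symm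
    _ ≡ b ^ 2 * K ^ 2 [ZMOD n] := hb.symm.mul_right _
    _ = (b * K) ^ 2 := (mul_pow b K 2).symm
    _ ≡ (-1) ^ 2 [ZMOD n] := hbK.pow 2
    _ = 1 := by norm_num

theorem stmt_11_general (b c : ℕ) (hc : 1 < c)
    (z Z : ℕ) (hZ2z : Z < 2 * z)
    (heq : b * (b ^ 2 - 1) = c ^ z * (c ^ (Z - z) - 1))
    (K : ℕ) (hKdef : b ^ 2 = 1 + K * c ^ z) :
    b * K = c ^ (Z - z) - 1 ∧ (K : ℤ) ^ 2 ≡ 1 [ZMOD ((c : ℤ) ^ (Z - z))] := by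
  have hbK : b * K = c ^ (Z - z) - 1 :=
    Nat.mul_eq_of_sq_eq_one_add_mul (pow_pos (by omega) z) hKdef heq
  refine ⟨hbK, Int.sq_modEq_one_of_mul_modEq_neg_one (b := b) ?_ ?_⟩
  · have hb : (b : ℤ) ^ 2 ≡ 1 [ZMOD (c : ℤ) ^ z] :=
      (Int.modEq_iff_dvd.2 ⟨K, by rw [← Nat.cast_pow, hKdef]; push_cast; ring⟩).symm
    exact hb.of_dvd (pow_dvd_pow _ (by omega))
  · have hpos : 1 ≤ c ^ (Z - z) := Nat.one_le_pow _ _ (by omega)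
    have hbK' : (b : ℤ) * K = (c : ℤ) ^ (Z - z) - 1 := by
      rw [← Nat.cast_mul, hbK, Nat.cast_sub hpos]; push_cast; rfl
    exact Int.modEq_iff_dvd.2 ⟨-1, by rw [hbK']; ring⟩

theorem stmt_11 (b c : ℕ) (hb : 1 < b) (hc : 1 < c) (hbc : Nat.Coprime b c)
    (z Z : ℕ) (hz : 0 < z) (hzZ : z < Z) (hZ2z : Z < 2 * z)
    (heq : b * (b ^ 2 - 1) = c ^ z * (c ^ (Z - z) - 1))
    (K : ℕ) (hK : 0 < K) (hKdef : b ^ 2 = 1 + K * c ^ z) :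
    b * K = c ^ (Z - z) - 1 ∧ (K : ℤ) ^ 2 ≡ 1 [ZMOD ((c : ℤ) ^ (Z - z))] :=
  stmt_11_general b c hc z Z hZ2z heq K hKdef
end

section
/- Let a, b, c be pairwise coprime integers greater than 1 and z, Z positive integers with Z ≥ 2z. Suppose a = A·D + δ and b = B·D − δ where δ ∈ {1,-1}, D > 2 is a divisor of c^z, and A, B are positive integers with A + B = c^z / D. If a^X + b^Y = c^Z for positive integers X, Y with δ^X = −(−δ)^Y, then D divides A·X + B·Y; in particular A·X + B·Y ≥ D, and hence D^2 / c^z ≤ max{X, Y}. -/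
/-!
Write `a = A D + δ` and `b = B D - δ`. Modulo `D²` only the first two binomial terms survive:
`a^X ≡ δ^X + X A δ^(X+1) D` and `b^Y ≡ (-δ)^Y + Y B (-δ)^(Y+1) D`. The parity condition cancels the
constant terms and makes both unit factors equal to `δ^(X+1)`, while `D² ∣ c^(2z) ∣ c^Z`; hence
`D² ∣ ±(A X + B Y) D`, i.e. `D ∣ A X + B Y`. The bound follows from `A X + B Y ≤ (A + B) max X Y`
and `(A + B) D = c^z`.
-/

/-- The exponent `n + 1` (rather than `n - 1`) avoids truncated subtraction; they agree as `e² = 1`. -/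
theorem sq_dvd_mul_add_pow_sub {R : Type*} [CommRing R] (d e u : R) (he : e ^ 2 = 1) (n : ℕ) :
    d ^ 2 ∣ (u * d + e) ^ n - (e ^ n + n * u * e ^ (n + 1) * d) := by
  induction n with
  | zero => simp
  | succ n ih =>
    obtain ⟨k, hk⟩ := ih
    refine ⟨k * (u * d + e) + n * u ^ 2 * e ^ (n + 1), ?_⟩
    push_cast
    linear_combination (u * d + e) * hk - u * d * e ^ n * he

theorem dvd_add_mul_of_sq_dvd_pow_add_pow {R : Type*} [CommRing R] [IsDomain R] {d e u v : R}
    {m n : ℕ} (hd : d ≠ 0) (he : e ^ 2 = 1) (hpar : e ^ m + (-e) ^ n = 0)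
    (h : d ^ 2 ∣ (u * d + e) ^ m + (v * d - e) ^ n) :
    d ∣ u * m + v * n := by
  have hu := sq_dvd_mul_add_pow_sub d e u he m
  have hv := sq_dvd_mul_add_pow_sub d (-e) v (by rwa [neg_sq]) n
  rw [← sub_eq_add_neg] at hv
  have hlin : d * d ∣ e ^ (m + 1) * (u * m + v * n) * d := by
    have key : e ^ (m + 1) * (u * m + v * n) * d
        = (u * d + e) ^ m + (v * d - e) ^ n - ((u * d + e) ^ m - (e ^ m + m * u * e ^ (m + 1) * d))
          - ((v * d - e) ^ n - ((-e) ^ n + n * v * (-e) ^ (n + 1) * d)) := by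
      linear_combination (-1 + n * v * e * d) * hpar
    rw [key, ← sq]
    exact dvd_sub (dvd_sub h hu) hv
  have hunit : IsUnit (e ^ (m + 1)) := (IsUnit.of_mul_eq_one e (by rw [← sq, he])).pow _
  exact hunit.dvd_mul_left.mp ((mul_dvd_mul_iff_right hd).mp hlin)

theorem sq_le_max_mul_of_le_add_mul {A B D X Y : ℕ} (h : D ≤ A * X + B * Y) :
    D ^ 2 ≤ max X Y * ((A + B) * D) := by
  have hM : A * X + B * Y ≤ (A + B) * max X Y := by
    rw [add_mul]
    gcongr
    exacts [le_max_left X Y, le_max_right X Y]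
  calc D ^ 2 = D * D := sq D
    _ ≤ ((A + B) * max X Y) * D := by gcongr; exact h.trans hM
    _ = max X Y * ((A + B) * D) := by ring

theorem stmt_12_general (a b c : ℕ)
    (z Z : ℕ) (hZ2z : 2 * z ≤ Z)
    (δ : ℤ) (hδ : δ = 1 ∨ δ = -1)
    (D : ℕ) (hD2 : 2 < D) (hDdvd : D ∣ c ^ z)
    (A B : ℕ) (hA : 0 < A)
    (haform : (a : ℤ) = A * D + δ) (hbform : (b : ℤ) = B * D - δ)
    (hAB : A + B = c ^ z / D)
    (X Y : ℕ) (hX : 0 < X)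
    (heq : a ^ X + b ^ Y = c ^ Z)
    (hpar : δ ^ X + (-δ) ^ Y = 0) :
    D ∣ A * X + B * Y ∧ D ≤ A * X + B * Y ∧ D ^ 2 ≤ max X Y * c ^ z := by
  have hδsq : δ ^ 2 = 1 := by rcases hδ with rfl | rfl <;> norm_num
  have hDc : D ^ 2 ∣ c ^ Z :=
    (pow_dvd_pow_of_dvd hDdvd 2).trans (by rw [← pow_mul]; exact pow_dvd_pow c (by omega))
  have hsq : (D : ℤ) ^ 2 ∣ (A * D + δ) ^ X + (B * D - δ) ^ Y := by
    rw [← haform, ← hbform]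
    exact_mod_cast heq ▸ hDc
  have hdvd : D ∣ A * X + B * Y := by
    exact_mod_cast dvd_add_mul_of_sq_dvd_pow_add_pow (by omega) hδsq hpar hsq
  have hle : D ≤ A * X + B * Y := Nat.le_of_dvd (by positivity) hdvd
  refine ⟨hdvd, hle, ?_⟩
  rw [← Nat.div_mul_cancel hDdvd, ← hAB]
  exact sq_le_max_mul_of_le_add_mul hle

theorem stmt_12 (a b c : ℕ) (ha : 1 < a) (hb : 1 < b) (hc : 1 < c)
    (hab : Nat.Coprime a b) (hac : Nat.Coprime a c) (hbc : Nat.Coprime b c)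
    (z Z : ℕ) (hz : 0 < z) (hZ : 0 < Z) (hZ2z : 2 * z ≤ Z)
    (δ : ℤ) (hδ : δ = 1 ∨ δ = -1)
    (D : ℕ) (hD2 : 2 < D) (hDdvd : D ∣ c ^ z)
    (A B : ℕ) (hA : 0 < A) (hB : 0 < B)
    (haform : (a : ℤ) = A * D + δ) (hbform : (b : ℤ) = B * D - δ)
    (hAB : A + B = c ^ z / D)
    (X Y : ℕ) (hX : 0 < X) (hY : 0 < Y)
    (heq : a ^ X + b ^ Y = c ^ Z)
    (hpar : δ ^ X + (-δ) ^ Y = 0) :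
    D ∣ A * X + B * Y ∧ D ≤ A * X + B * Y ∧ D ^ 2 ≤ max X Y * c ^ z :=
  stmt_12_general a b c z Z hZ2z δ hδ D hD2 hDdvd A B hA haform hbform hAB X Y hX heq hpar
end

section
/- Let c be a prime of the form m^2 + 1 with m even, and set β = m + i in the Gaussian integers. Suppose a, b are coprime positive integers with a odd and b even, and a^2 + b^2 = c^Z for a positive integer Z. Then a = |β^Z + (−β̄)^Z| / 2 and b = |β^Z − (−β̄)^Z| / 2, where β̄ = m − i. -/
/-!
Put `γ = 1 + m i`. Then `β = i γ̄` and `-β̄ = i γ`, so `β^Z ± (-β̄)^Z = i^Z (γ̄^Z ± γ^Z)`, and halving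
the norms gives `|Re γ^Z|` and `|Im γ^Z|`. Now `γ` is a Gaussian prime of norm `c`, and `γ ≡ 1 mod 2`
because `m` is even. It cannot divide both `a + b i` and `a - b i`: it would then divide `2a` and
`2b`, hence `2`, hence (as `2 ∣ γ - 1`) also `1`. As `(a + b i)(a - b i) = (γ γ̄)^Z`, the prime power
`γ^Z` divides `a + b i` or `a - b i`, and comparing norms, `a + b i` is a unit times `γ^Z` or `γ̄^Z`.
So `{a, b} = {|Re γ^Z|, |Im γ^Z|}`, and since `γ^Z ≡ 1 mod 2` the odd one, `a`, is `|Re γ^Z|`.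
-/

open Complex

open scoped ComplexConjugate

local notation "ℤ[i]" => GaussianInt

theorem Complex.norm_add_conj (z : ℂ) : ‖z + conj z‖ = 2 * |z.re| := by
  rw [add_conj, norm_real, Real.norm_eq_abs, abs_mul, abs_two]

theorem Complex.norm_sub_conj (z : ℂ) : ‖z - conj z‖ = 2 * |z.im| := by
  rw [sub_conj, norm_mul, norm_I, mul_one, norm_real, Real.norm_eq_abs, abs_mul, abs_two]

theorem Complex.norm_mul_pow_add_mul_pow (z : ℂ) (n : ℕ) :
    ‖(I * conj z) ^ n + (I * z) ^ n‖ = 2 * |(z ^ n).re| := by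
  rw [mul_pow, mul_pow, ← mul_add, norm_mul, norm_pow, norm_I, one_pow, one_mul, ← map_pow,
    add_comm, norm_add_conj]

theorem Complex.norm_mul_pow_sub_mul_pow (z : ℂ) (n : ℕ) :
    ‖(I * conj z) ^ n - (I * z) ^ n‖ = 2 * |(z ^ n).im| := by
  rw [mul_pow, mul_pow, ← mul_sub, norm_mul, norm_pow, norm_I, one_pow, one_mul, ← map_pow,
    ← norm_neg, neg_sub, norm_sub_conj]

theorem Prime.pow_dvd_or_pow_dvd_of_not_dvd_and_dvd {M : Type*} [CommMonoidWithZero M]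
    [IsCancelMulZero M] {p a b : M} (hp : Prime p) (h : ¬(p ∣ a ∧ p ∣ b)) (n : ℕ)
    (hab : p ^ n ∣ a * b) : p ^ n ∣ a ∨ p ^ n ∣ b := by
  by_cases ha : p ∣ a
  · exact .inl (hp.pow_dvd_of_dvd_mul_right n (fun hb => h ⟨ha, hb⟩) hab)
  · exact .inr (hp.pow_dvd_of_dvd_mul_left n ha hab)

theorem not_dvd_two_of_two_dvd_sub_one {R : Type*} [CommRing R] {x : R} (hx : ¬IsUnit x)
    (h : 2 ∣ x - 1) : ¬x ∣ 2 := fun h2 =>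
  hx (isUnit_of_dvd_one ((dvd_sub_right (dvd_refl x)).mp (h2.trans h)))

namespace GaussianInt

open Zsqrtd

theorem two_dvd_iff {x : ℤ[i]} : 2 ∣ x ↔ 2 ∣ x.re ∧ 2 ∣ x.im :=
  intCast_dvd 2 x

theorem prime_of_prime_norm {x : ℤ[i]} (h : Prime x.norm) : Prime x := by
  have : IsLocalHom (normMonoidHom (d := -1)) := ⟨fun z hz => (isUnit_iff_norm_isUnit z).mpr hz⟩
  exact irreducible_iff_prime.mp (Irreducible.of_map (f := normMonoidHom) h.irreducible)

theorem norm_eq_sq_add_sq (x : ℤ[i]) : x.norm = x.re ^ 2 + x.im ^ 2 := by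
  rw [Zsqrtd.norm_def]; ring

theorem natAbs_re_im_of_associated {x y : ℤ[i]} (h : Associated x y) :
    (y.re.natAbs = x.re.natAbs ∧ y.im.natAbs = x.im.natAbs) ∨
      (y.re.natAbs = x.im.natAbs ∧ y.im.natAbs = x.re.natAbs) := by
  obtain ⟨u, rfl⟩ := h
  have hu : IsUnit (u : ℤ[i]) := u.isUnit
  generalize (u : ℤ[i]) = v at hu ⊢
  rw [← norm_eq_one_iff' (by norm_num), norm_eq_sq_add_sq] at hu
  obtain ⟨r, s⟩ := v
  dsimp only at hu
  obtain ⟨hr₁, hr₂⟩ : -1 ≤ r ∧ r ≤ 1 := by constructor <;> nlinarith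
  obtain ⟨hs₁, hs₂⟩ : -1 ≤ s ∧ s ≤ 1 := by constructor <;> nlinarith
  interval_cases r <;> interval_cases s <;> simp at hu ⊢

theorem associated_of_dvd_of_norm_eq {x y : ℤ[i]} (hx : x ≠ 0) (hxy : x ∣ y)
    (h : y.norm = x.norm) : Associated x y := by
  obtain ⟨t, rfl⟩ := hxy
  rw [norm_mul, mul_eq_left₀ (norm_eq_zero.not.mpr hx), norm_eq_one_iff' (by norm_num)] at h
  exact associated_mul_unit_right x t h

theorem dvd_two_of_dvd_of_dvd_star {p w : ℤ[i]} (hw : IsCoprime w.re w.im) (h : p ∣ w)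
    (h' : p ∣ star w) : p ∣ 2 := by
  have hre : ((2 * w.re : ℤ) : ℤ[i]) = w + star w := by ext <;> simp [two_mul]
  have him : ((2 * w.im : ℤ) : ℤ[i]) = (w - star w) * ⟨0, -1⟩ := by ext <;> simp [two_mul]
  obtain ⟨u, v, huv⟩ := hw
  have h2 : ((2 : ℤ) : ℤ[i]) = u * ((2 * w.re : ℤ) : ℤ[i]) + v * ((2 * w.im : ℤ) : ℤ[i]) := by
    rw [← Int.cast_mul, ← Int.cast_mul, ← Int.cast_add]
    exact congrArg _ (by linear_combination -2 * huv)
  rw [Int.cast_ofNat, hre, him] at h2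
  rw [h2]
  exact dvd_add ((dvd_add h h').mul_left _) (((dvd_sub h h').mul_right _).mul_left _)

theorem natAbs_re_im_eq_of_norm_eq_pow {p w : ℤ[i]} {n : ℕ} (hp : Prime p) (hp2 : ¬p ∣ 2)
    (hw : IsCoprime w.re w.im) (h : w.norm = p.norm ^ n) :
    (w.re.natAbs = (p ^ n).re.natAbs ∧ w.im.natAbs = (p ^ n).im.natAbs) ∨
      (w.re.natAbs = (p ^ n).im.natAbs ∧ w.im.natAbs = (p ^ n).re.natAbs) := by
  have hdvd : p ^ n ∣ w * star w := by
    rw [← norm_eq_mul_conj, h, Int.cast_pow, norm_eq_mul_conj, mul_pow]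
    exact dvd_mul_right _ _
  have hnorm : (p ^ n).norm = p.norm ^ n := map_pow normMonoidHom p n
  have hp0 : p ^ n ≠ 0 := pow_ne_zero n hp.ne_zero
  rcases hp.pow_dvd_or_pow_dvd_of_not_dvd_and_dvd
      (fun h' => hp2 (dvd_two_of_dvd_of_dvd_star hw h'.1 h'.2)) n hdvd with h' | h'
  · exact natAbs_re_im_of_associated (associated_of_dvd_of_norm_eq hp0 h' (by rw [h, hnorm]))
  · simpa using natAbs_re_im_of_associated
      (associated_of_dvd_of_norm_eq hp0 h' (by rw [Zsqrtd.norm_conj, h, hnorm]))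

theorem natAbs_re_im_eq_of_norm_eq_pow_of_two_dvd_sub_one {p w : ℤ[i]} {n : ℕ} (hp : Prime p)
    (hp1 : 2 ∣ p - 1) (hw : IsCoprime w.re w.im) (hw₁ : Odd w.re) (h : w.norm = p.norm ^ n) :
    w.re.natAbs = (p ^ n).re.natAbs ∧ w.im.natAbs = (p ^ n).im.natAbs := by
  have hpow : (2 : ℤ[i]) ∣ p ^ n - 1 := hp1.trans (by simpa using sub_dvd_pow_sub_pow p 1 n)
  obtain ⟨-, him⟩ := two_dvd_iff.mp hpow
  rcases natAbs_re_im_eq_of_norm_eq_pow hp (not_dvd_two_of_two_dvd_sub_one hp.not_isUnit hp1) hw h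
    with h' | ⟨h', -⟩
  · exact h'
  · simp only [im_sub, im_one, sub_zero] at him
    obtain ⟨k, hk⟩ := hw₁
    omega

end GaussianInt

theorem stmt_13_general (m : ℕ) (hm : Even m) (c : ℕ) (hc : c = m ^ 2 + 1)
    (hcp : c.Prime)
    (a b : ℕ) (hab : Nat.Coprime a b)
    (haodd : Odd a)
    (Z : ℕ) (heq : a ^ 2 + b ^ 2 = c ^ Z)
    (β : ℂ) (hβ : β = (m : ℂ) + I) :
    (a : ℝ) = ‖β ^ Z + (-(starRingEnd ℂ β)) ^ Z‖ / 2 ∧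
    (b : ℝ) = ‖β ^ Z - (-(starRingEnd ℂ β)) ^ Z‖ / 2 := by
  set γ : ℤ[i] := ⟨1, m⟩
  have hγ_norm : γ.norm = c := by rw [GaussianInt.norm_eq_sq_add_sq, hc]; push_cast; ring
  have hγ : Prime γ :=
    GaussianInt.prime_of_prime_norm (hγ_norm ▸ Nat.prime_iff_prime_int.mp hcp)
  have hγ_one : 2 ∣ γ - 1 := by
    rw [GaussianInt.two_dvd_iff]
    exact ⟨by simp [γ], by simpa [γ, ← even_iff_two_dvd] using hm⟩
  obtain ⟨ha, hb⟩ := GaussianInt.natAbs_re_im_eq_of_norm_eq_pow_of_two_dvd_sub_one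
    (w := ⟨a, b⟩) (n := Z) hγ hγ_one (Nat.isCoprime_iff_coprime.mpr hab)
    (by simpa using haodd)
    (by rw [GaussianInt.norm_eq_sq_add_sq, hγ_norm]; dsimp only; exact_mod_cast heq)
  have hβγ : β = I * conj (γ : ℂ) := by
    rw [hβ, GaussianInt.toComplex_def']; apply Complex.ext <;> simp
  have hβγ' : -conj β = I * (γ : ℂ) := by
    rw [hβγ, GaussianInt.toComplex_def']; simp
  rw [hβγ', hβγ, Complex.norm_mul_pow_add_mul_pow, Complex.norm_mul_pow_sub_mul_pow, ← map_pow,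
    ← GaussianInt.intCast_re, ← GaussianInt.intCast_im]
  simp only [Int.natAbs_natCast] at ha hb
  constructor <;> simp [ha, hb, Nat.cast_natAbs]

theorem stmt_13 (m : ℕ) (hm : Even m) (c : ℕ) (hc : c = m ^ 2 + 1)
    (hcp : c.Prime)
    (a b : ℕ) (ha : 0 < a) (hb : 0 < b) (hab : Nat.Coprime a b)
    (haodd : Odd a) (hbeven : Even b)
    (Z : ℕ) (hZ : 0 < Z) (heq : a ^ 2 + b ^ 2 = c ^ Z)
    (β : ℂ) (hβ : β = (m : ℂ) + I) :
    (a : ℝ) = ‖β ^ Z + (-(starRingEnd ℂ β)) ^ Z‖ / 2 ∧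
    (b : ℝ) = ‖β ^ Z - (-(starRingEnd ℂ β)) ^ Z‖ / 2 :=
  stmt_13_general m hm c hc hcp a b hab haodd Z heq β hβ
end

section
/- Let c = m^2 + 1 be prime with m = 2^e, and β = m + i ∈ ℤ[i]. For any positive integer Z: if Z is even then Re(β^Z) ≡ ±2^{Z−1} (mod c), and if Z is odd then Im(β^Z) ≡ ±2^{Z−1} (mod c). Consequently, the extended multiplicative order modulo c of |Re(β^Z)| (for Z even) or |Im(β^Z)| (for Z odd), when coprime to c, equals 2e/gcd(2e, Z−1). -/
/-!
Modulo `c` we have `m ^ 2 ≡ -1`, hence `β ^ 2 = m ^ 2 - 1 + 2 m i ≡ 2 m β` and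
`β ^ Z ≡ (2 m) ^ (Z - 1) β`: the real and imaginary parts of `β ^ Z` are `2 ^ (Z - 1) m ^ Z` and
`2 ^ (Z - 1) m ^ (Z - 1)`, and the even one of these powers of `m` is `±1`.

If `x ≡ ±2 ^ w`, then `x ^ n ≡ ±1` iff `(x ^ 2) ^ n ≡ 1`, so the extended order of `x` is the order
of `x ^ 2 ≡ 2 ^ (2 w)`. As `c = 2 ^ (2 e) + 1` is a Fermat prime, `2 e` is a power of two and `2`
has order exactly `4 e` modulo `c`, so this order is `4 e / gcd (4 e, 2 w) = 2 e / gcd (2 e, w)`.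
-/

theorem GaussianInt.cast_re_im_pow_succ {R : Type*} [CommRing R] {a : ℤ} (ha : (a : R) ^ 2 = -1)
    (k : ℕ) :
    (((⟨a, 1⟩ : GaussianInt) ^ (k + 1)).re : R) = (2 * a) ^ k * a ∧
      (((⟨a, 1⟩ : GaussianInt) ^ (k + 1)).im : R) = (2 * a) ^ k := by
  induction k with
  | zero => simp
  | succ k ih =>
    rw [pow_succ, Zsqrtd.re_mul, Zsqrtd.im_mul]
    push_cast
    rw [ih.1, ih.2]
    constructor
    · linear_combination (-(2 * (a : R)) ^ k) * ha
    · ring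

theorem mul_pow_eq_self_or_neg_of_sq_eq_neg_one {R : Type*} [Monoid R] [HasDistribNeg R]
    {a : R} (ha : a ^ 2 = -1) {j : ℕ} (hj : Even j) (b : R) : b * a ^ j = b ∨ b * a ^ j = -b := by
  obtain ⟨t, rfl⟩ := hj
  rw [← two_mul, pow_mul, ha]
  rcases neg_one_pow_eq_or R t with h | h <;> simp [h]

theorem ZMod.orderOf_two_of_prime_two_pow_add_one {n : ℕ} (hn : n ≠ 0) (hp : (2 ^ n + 1).Prime) :
    orderOf (2 : ZMod (2 ^ n + 1)) = 2 * n := by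
  obtain ⟨v, rfl⟩ := Nat.pow_of_pow_add_prime one_lt_two hn hp
  have : Fact (2 < 2 ^ 2 ^ v + 1) :=
    ⟨by have := Nat.one_lt_two_pow (pow_ne_zero v two_ne_zero); omega⟩
  have h : (2 : ZMod (2 ^ 2 ^ v + 1)) ^ 2 ^ v = -1 := by
    rw [eq_neg_iff_add_eq_zero]
    exact_mod_cast ZMod.natCast_self (2 ^ 2 ^ v + 1)
  rw [← pow_succ']
  apply orderOf_eq_prime_pow
  · rw [h]
    exact ZMod.neg_one_ne_one
  · rw [pow_succ, pow_mul, h, neg_one_sq]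

theorem isLeast_pow_eq_one_or_neg_one {R : Type*} [Ring R] [NoZeroDivisors R] {x : R}
    (hx : IsOfFinOrder (x ^ 2)) :
    IsLeast {n | 0 < n ∧ (x ^ n = 1 ∨ x ^ n = -1)} (orderOf (x ^ 2)) := by
  have key (n : ℕ) : (x ^ n = 1 ∨ x ^ n = -1) ↔ (x ^ 2) ^ n = 1 := by
    rw [pow_right_comm, sq_eq_one_iff]
  simp only [key]
  exact ⟨⟨hx.orderOf_pos, pow_orderOf_eq_one _⟩,
    fun n ⟨hn, h⟩ => orderOf_le_of_pow_eq_one hn h⟩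

theorem isLeast_natAbs_pow_modEq_one_or_neg_one {e c : ℕ} (he : e ≠ 0)
    (hc : c = 2 ^ (2 * e) + 1) (hcp : c.Prime)
    {A : ℤ} {w : ℕ} (hA : (A : ZMod c) = 2 ^ w ∨ (A : ZMod c) = -2 ^ w) :
    IsLeast {n : ℕ | 0 < n ∧
      ((A.natAbs : ℤ) ^ n ≡ 1 [ZMOD c] ∨ (A.natAbs : ℤ) ^ n ≡ -1 [ZMOD c])}
      (2 * e / Nat.gcd (2 * e) w) := by
  have := Fact.mk hcp
  have hord2 : orderOf (2 : ZMod c) = 2 * (2 * e) := by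
    subst hc
    exact ZMod.orderOf_two_of_prime_two_pow_add_one (by omega) hcp
  have h2 : IsOfFinOrder (2 : ZMod c) := orderOf_pos_iff.mp (by omega)
  have hsq : ((A.natAbs : ℤ) : ZMod c) ^ 2 = 2 ^ (2 * w) := by
    rw [← Int.cast_pow, Int.natAbs_sq, Int.cast_pow, pow_mul']
    rcases hA with h | h <;> simp [h]
  have hord : orderOf (((A.natAbs : ℤ) : ZMod c) ^ 2) = 2 * e / Nat.gcd (2 * e) w := by
    rw [hsq, h2.orderOf_pow, hord2, Nat.gcd_mul_left, Nat.mul_div_mul_left _ _ two_pos]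
  rw [← hord]
  simpa only [← ZMod.intCast_eq_intCast_iff, Int.cast_pow, Int.cast_one, Int.cast_neg]
    using isLeast_pow_eq_one_or_neg_one (hsq ▸ h2.pow)

theorem intCast_modEq_two_pow_or_neg {c : ℕ} {A : ℤ} {w : ℕ}
    (hA : (A : ZMod c) = 2 ^ w ∨ (A : ZMod c) = -2 ^ w) :
    A ≡ 2 ^ w [ZMOD c] ∨ A ≡ -(2 ^ w) [ZMOD c] := by
  simpa only [← ZMod.intCast_eq_intCast_iff, Int.cast_pow, Int.cast_neg, Int.cast_ofNat] using hA

theorem stmt_15 (e : ℕ) (he : 1 ≤ e) (m c : ℕ) (hm : m = 2 ^ e)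
    (hc : c = m ^ 2 + 1) (hcp : c.Prime)
    (β : GaussianInt) (hβ : β = ⟨(m : ℤ), 1⟩)
    (Z : ℕ) (hZ : 0 < Z) :
    (Even Z →
      (((β ^ Z).re ≡ 2 ^ (Z - 1) [ZMOD (c : ℤ)] ∨
        (β ^ Z).re ≡ -(2 ^ (Z - 1)) [ZMOD (c : ℤ)]) ∧
       (IsCoprime ((β ^ Z).re) (c : ℤ) →
        IsLeast {n : ℕ | 0 < n ∧
          (((β ^ Z).re.natAbs : ℤ) ^ n ≡ 1 [ZMOD (c : ℤ)] ∨
           ((β ^ Z).re.natAbs : ℤ) ^ n ≡ -1 [ZMOD (c : ℤ)])}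
          (2 * e / Nat.gcd (2 * e) (Z - 1))))) ∧
    (Odd Z →
      (((β ^ Z).im ≡ 2 ^ (Z - 1) [ZMOD (c : ℤ)] ∨
        (β ^ Z).im ≡ -(2 ^ (Z - 1)) [ZMOD (c : ℤ)]) ∧
       (IsCoprime ((β ^ Z).im) (c : ℤ) →
        IsLeast {n : ℕ | 0 < n ∧
          (((β ^ Z).im.natAbs : ℤ) ^ n ≡ 1 [ZMOD (c : ℤ)] ∨
           ((β ^ Z).im.natAbs : ℤ) ^ n ≡ -1 [ZMOD (c : ℤ)])}
          (2 * e / Nat.gcd (2 * e) (Z - 1))))) := by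
  obtain ⟨k, rfl⟩ : ∃ k, Z = k + 1 := ⟨Z - 1, by omega⟩
  have hc' : c = 2 ^ (2 * e) + 1 := by rw [hc, hm, ← pow_mul, mul_comm]
  have hm2 : ((m : ℤ) : ZMod c) ^ 2 = -1 := by
    rw [eq_neg_iff_add_eq_zero]
    exact_mod_cast (ZMod.natCast_eq_zero_iff _ c).mpr hc.dvd
  obtain ⟨hre, him⟩ := GaussianInt.cast_re_im_pow_succ hm2 k
  subst hβ
  rw [Nat.add_sub_cancel]
  refine ⟨fun hZ_even => ?_, fun hZ_odd => ?_⟩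
  · have hA := mul_pow_eq_self_or_neg_of_sq_eq_neg_one hm2 hZ_even (2 ^ k : ZMod c)
    rw [pow_succ, ← mul_assoc, ← mul_pow, ← hre] at hA
    exact ⟨intCast_modEq_two_pow_or_neg hA,
      fun _ => isLeast_natAbs_pow_modEq_one_or_neg_one (by omega) hc' hcp hA⟩
  · have hA := mul_pow_eq_self_or_neg_of_sq_eq_neg_one hm2
      (Nat.not_odd_iff_even.mp (Nat.odd_add_one.mp hZ_odd)) (2 ^ k : ZMod c)
    rw [← mul_pow, ← him] at hA
    exact ⟨intCast_modEq_two_pow_or_neg hA,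
      fun _ => isLeast_natAbs_pow_modEq_one_or_neg_one (by omega) hc' hcp hA⟩
end

section
/- Let u > v be coprime odd positive integers, c an odd prime, and suppose c^{Z/2} + b' = u^{2X'} and c^{Z/2} − b' = v^{2X'} for positive integers b', Z (Z even) and odd positive integer X'. Then 2·c^{Z/2} = (u^2 + v^2)·((u^{2X'} + v^{2X'})/(u^2 + v^2)), and every prime factor of u^{2X'} + v^{2X'} divides 2c. If moreover Zsigmondy's theorem forces X' = 1 whenever u^{2X'} + v^{2X'} has no prime factor outside those of u^2 + v^2, then X' = 1. -/
/-! Adding the two equations gives `u ^ (2X') + v ^ (2X') = 2 c ^ (Z/2)`, and `u² + v²` divides the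
left side because `X'` is odd. Every prime factor of `2 c ^ (Z/2)` is `2` or `c`; both divide `u² + v²`:
`2` because `u, v` are odd, and `c` because a divisor of `2 c ^ (Z/2)` larger than `2` must be
divisible by `c`. -/

theorem Nat.Prime.dvd_of_dvd_mul_pow_of_not_dvd {c n a k : ℕ} (hc : c.Prime)
    (hn : n ∣ a * c ^ k) (hna : ¬ n ∣ a) : c ∣ n := by
  by_contra hcn
  have hcop : n.Coprime (c ^ k) := ((hc.coprime_iff_not_dvd.mpr hcn).symm).pow_right k
  exact hna (hcop.dvd_of_dvd_mul_right hn)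

theorem Nat.Prime.dvd_mul_of_dvd_mul_pow {p a c k : ℕ} (hp : p.Prime) (h : p ∣ a * c ^ k) :
    p ∣ a * c := by
  rcases hp.dvd_mul.mp h with ha | hc
  · exact dvd_mul_of_dvd_left ha c
  · exact dvd_mul_of_dvd_right (hp.dvd_of_dvd_pow hc) a

theorem stmt_16_general (u v : ℕ) (huv : v < u)
    (hu : Odd u) (hv : Odd v)
    (c : ℕ) (hc : c.Prime)
    (b' Z : ℕ)
    (X' : ℕ) (hX'odd : Odd X')
    (heq1 : c ^ (Z / 2) + b' = u ^ (2 * X'))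
    (heq2 : c ^ (Z / 2) - b' = v ^ (2 * X')) :
    2 * c ^ (Z / 2) = (u ^ 2 + v ^ 2) * ((u ^ (2 * X') + v ^ (2 * X')) / (u ^ 2 + v ^ 2)) ∧
    (∀ p : ℕ, p.Prime → p ∣ u ^ (2 * X') + v ^ (2 * X') → p ∣ 2 * c) ∧
    (((∀ p : ℕ, p.Prime → p ∣ u ^ (2 * X') + v ^ (2 * X') → p ∣ u ^ 2 + v ^ 2) → X' = 1)
      → X' = 1) := by
  have hv_pow : 0 < v ^ (2 * X') := pow_pos hv.pos _
  have hsum : u ^ (2 * X') + v ^ (2 * X') = 2 * c ^ (Z / 2) := by omega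
  have hdvd : u ^ 2 + v ^ 2 ∣ u ^ (2 * X') + v ^ (2 * X') := by
    simpa only [pow_mul] using hX'odd.nat_add_dvd_pow_add_pow (u ^ 2) (v ^ 2)
  have hgt : 2 < u ^ 2 + v ^ 2 := by nlinarith [hv.pos]
  have hc_dvd : c ∣ u ^ 2 + v ^ 2 :=
    hc.dvd_of_dvd_mul_pow_of_not_dvd (hsum ▸ hdvd) fun h => by
      have := Nat.le_of_dvd two_pos h; omega
  have htwo_dvd : 2 ∣ u ^ 2 + v ^ 2 := (hu.pow.add_odd hv.pow).two_dvd
  have hprime : ∀ p : ℕ, p.Prime → p ∣ u ^ (2 * X') + v ^ (2 * X') → p ∣ 2 * c :=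
    fun p hp h => hp.dvd_mul_of_dvd_mul_pow (hsum ▸ h)
  refine ⟨by rw [Nat.mul_div_cancel' hdvd, hsum], hprime, fun hzsig => hzsig fun p hp h => ?_⟩
  rcases hp.dvd_mul.mp (hprime p hp h) with h2 | hpc
  exacts [h2.trans htwo_dvd, hpc.trans hc_dvd]

theorem stmt_16 (u v : ℕ) (huv : v < u) (hcop : Nat.Coprime u v)
    (hu : Odd u) (hv : Odd v) (hu0 : 0 < u) (hv0 : 0 < v)
    (c : ℕ) (hc : c.Prime) (hcodd : Odd c)
    (b' Z : ℕ) (hb' : 0 < b') (hZ : 0 < Z) (hZeven : Even Z)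
    (X' : ℕ) (hX' : 0 < X') (hX'odd : Odd X')
    (heq1 : c ^ (Z / 2) + b' = u ^ (2 * X'))
    (heq2 : c ^ (Z / 2) - b' = v ^ (2 * X')) :
    2 * c ^ (Z / 2) = (u ^ 2 + v ^ 2) * ((u ^ (2 * X') + v ^ (2 * X')) / (u ^ 2 + v ^ 2)) ∧
    (∀ p : ℕ, p.Prime → p ∣ u ^ (2 * X') + v ^ (2 * X') → p ∣ 2 * c) ∧
    (((∀ p : ℕ, p.Prime → p ∣ u ^ (2 * X') + v ^ (2 * X') → p ∣ u ^ 2 + v ^ 2) → X' = 1)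
      → X' = 1) :=
  stmt_16_general u v huv hu hv c hc b' Z X' hX'odd heq1 heq2
end

section
/- Let c be an odd prime such that c − 1 is a power of 2, and let a, b be integers coprime to c whose extended multiplicative orders modulo c are equal: e_c(a) = e_c(b) = E with E > 1. If (x,y,z) and (X,Y,Z) are two positive-integer solutions of a^x + b^y = c^z with Δ := |xY − Xy| ≠ 0 and z ≤ Z, then E divides Δ; moreover, if x ≢ X (mod 2) or y ≢ Y (mod 2), then Δ/E is odd. -/
/-!
Reducing both equations modulo `c` gives `a ^ x ≡ -b ^ y` and `a ^ X ≡ -b ^ Y`; eliminating `b`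
(resp. `a`) between them yields `a ^ Δ ≡ (-1) ^ (y + Y)` and `b ^ Δ ≡ (-1) ^ (x + X)`, so `E ∣ Δ`.
The extended order `E` is the order of `a ^ 2`; since `c - 1` is a power of two, so is the order
of `a`, which is therefore `2 * E` once `E > 1`, forcing `a ^ E ≡ -1`; likewise `b ^ E ≡ -1`.
Hence `(-1) ^ (Δ / E)` equals both `(-1) ^ (y + Y)` and `(-1) ^ (x + X)`, which is the parity
statement.
-/

section ExtendedOrder

variable {R : Type*} [Ring R] [NoZeroDivisors R]

theorem pow_eq_one_or_neg_one_iff_orderOf_sq_dvd (A : R) (n : ℕ) :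
    (A ^ n = 1 ∨ A ^ n = -1) ↔ orderOf (A ^ 2) ∣ n := by
  rw [orderOf_dvd_iff_pow_eq_one, ← pow_mul, mul_comm, pow_mul, sq_eq_one_iff]

theorem pow_orderOf_sq_eq_neg_one {A : R} {t : ℕ} (hA : orderOf A ∣ 2 ^ t)
    (h : orderOf (A ^ 2) ≠ 1) : A ^ orderOf (A ^ 2) = -1 := by
  obtain ⟨s, -, hs⟩ := (Nat.dvd_prime_pow Nat.prime_two).mp hA
  obtain _ | k := s
  · have hA1 : A = 1 := orderOf_eq_one_iff.mp (by simpa using hs)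
    simp [hA1] at h
  have hsq : orderOf (A ^ 2) = 2 ^ k := by
    rw [orderOf_pow_of_dvd two_ne_zero (hs ▸ dvd_pow_self 2 k.succ_ne_zero), hs, pow_succ,
      Nat.mul_div_cancel _ two_pos]
  have hne : A ^ 2 ^ k ≠ 1 :=
    pow_ne_one_of_lt_orderOf (by positivity) (hs ▸ Nat.pow_lt_pow_succ one_lt_two)
  rw [hsq]
  exact ((pow_eq_one_or_neg_one_iff_orderOf_sq_dvd A _).mpr (hsq ▸ dvd_rfl)).resolve_left hne

end ExtendedOrder

theorem eq_orderOf_sq_of_isLeast {c a E : ℕ} [Fact c.Prime] (hac : a.Coprime c)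
    (hE : IsLeast {n : ℕ | 0 < n ∧
      ((a : ℤ) ^ n ≡ 1 [ZMOD (c : ℤ)] ∨ (a : ℤ) ^ n ≡ -1 [ZMOD (c : ℤ)])} E) :
    E = orderOf ((a : ZMod c) ^ 2) := by
  have hA : (a : ZMod c) ≠ 0 := ((ZMod.isUnit_iff_coprime a c).mpr hac).ne_zero
  have hpos : 0 < orderOf ((a : ZMod c) ^ 2) :=
    orderOf_pos_iff.mpr (isOfFinOrder_iff_pow_eq_one.mpr
      ⟨c - 1, Nat.sub_pos_of_lt (Fact.out : c.Prime).one_lt, by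
        rw [← pow_mul, mul_comm, pow_mul, ZMod.pow_card_sub_one_eq_one hA, one_pow]⟩)
  have hset : {n : ℕ | 0 < n ∧
      ((a : ℤ) ^ n ≡ 1 [ZMOD (c : ℤ)] ∨ (a : ℤ) ^ n ≡ -1 [ZMOD (c : ℤ)])} =
      {n : ℕ | 0 < n ∧ orderOf ((a : ZMod c) ^ 2) ∣ n} := by
    ext n
    simp only [Set.mem_ofPred_eq, ← pow_eq_one_or_neg_one_iff_orderOf_sq_dvd,
      ← ZMod.intCast_eq_intCast_iff]
    push_cast
    rfl
  rw [hset] at hE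
  exact hE.unique ⟨⟨hpos, dvd_rfl⟩, fun n hn => Nat.le_of_dvd hn.1 hn.2⟩

theorem natCast_pow_eq_neg_one_of_isLeast {c a E : ℕ} [Fact c.Prime] {t : ℕ}
    (ht : c - 1 = 2 ^ t) (hac : a.Coprime c) (hE1 : 1 < E)
    (hE : IsLeast {n : ℕ | 0 < n ∧
      ((a : ℤ) ^ n ≡ 1 [ZMOD (c : ℤ)] ∨ (a : ℤ) ^ n ≡ -1 [ZMOD (c : ℤ)])} E) :
    (a : ZMod c) ^ E = -1 := by
  have hA : (a : ZMod c) ≠ 0 := ((ZMod.isUnit_iff_coprime a c).mpr hac).ne_zero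
  rw [eq_orderOf_sq_of_isLeast hac hE] at hE1 ⊢
  exact pow_orderOf_sq_eq_neg_one (ht ▸ ZMod.orderOf_dvd_card_sub_one hA) hE1.ne'

theorem pow_natAbs_sub_eq_neg_one_pow_s19 {F : Type*} [Field F] {A : F} (hA : A ≠ 0)
    {p q e f : ℕ} (h : A ^ p * (-1) ^ e = A ^ q * (-1) ^ f) :
    A ^ ((p : ℤ) - q).natAbs = (-1) ^ (e + f) := by
  wlog hqp : q ≤ p generalizing p q e f
  · rw [← Int.natAbs_neg, neg_sub, add_comm]
    exact this h.symm (le_of_not_ge hqp)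
  obtain ⟨D, rfl⟩ := Nat.exists_eq_add_of_le hqp
  have hD : ((q + D : ℕ) : ℤ) - q = D := by push_cast; ring
  have hcancel : A ^ D * (-1) ^ e = (-1) ^ f :=
    mul_left_cancel₀ (pow_ne_zero q hA) (by rw [← h, pow_add]; ring)
  have hsq : ((-1 : F) ^ e) ^ 2 = 1 := by rw [← pow_mul, pow_mul', neg_one_sq, one_pow]
  rw [hD, Int.natAbs_natCast, pow_add]
  linear_combination (-1 : F) ^ e * hcancel - A ^ D * hsq

theorem pow_natAbs_eq_neg_one_pow_of_eq_neg {F : Type*} [Field F] {A B : F} (hA : A ≠ 0)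
    {x y X Y : ℕ} (h1 : A ^ x = -B ^ y) (h2 : A ^ X = -B ^ Y) :
    A ^ ((x : ℤ) * Y - X * y).natAbs = (-1) ^ (y + Y) := by
  have hx : A ^ (x * Y) = (-1) ^ Y * B ^ (y * Y) := by rw [pow_mul, h1, neg_pow, ← pow_mul]
  have hX : A ^ (X * y) = (-1) ^ y * B ^ (y * Y) := by
    rw [pow_mul, h2, neg_pow, ← pow_mul, mul_comm Y y]
  have h := pow_natAbs_sub_eq_neg_one_pow_s19 (e := y) (f := Y) hA
    (show A ^ (x * Y) * (-1) ^ y = A ^ (X * y) * (-1) ^ Y by rw [hx, hX]; ring)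
  push_cast at h
  exact h

theorem natCast_pow_eq_neg_pow_of_add_eq_pow {a b c x y z : ℕ} (hz : 0 < z)
    (h : a ^ x + b ^ y = c ^ z) : (a : ZMod c) ^ x = -(b : ZMod c) ^ y := by
  have h' := congrArg (Nat.cast : ℕ → ZMod c) h
  push_cast at h'
  rw [ZMod.natCast_self, zero_pow hz.ne'] at h'
  exact eq_neg_of_add_eq_zero_left h'

theorem even_iff_even_of_neg_one_pow_eq {R : Type*} [Monoid R] [HasDistribNeg R]
    (hR : (-1 : R) ≠ 1) {m n : ℕ} (h : (-1 : R) ^ m = (-1) ^ n) : Even m ↔ Even n := by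
  rw [← neg_one_pow_eq_one_iff_even hR, ← neg_one_pow_eq_one_iff_even hR, h]

theorem stmt_19_general (c : ℕ) (hcp : c.Prime) (hcodd : Odd c)
    (ht : ∃ t : ℕ, c - 1 = 2 ^ t)
    (a b : ℕ)
    (hac : Nat.Coprime a c) (hbc : Nat.Coprime b c)
    (E : ℕ) (hE1 : 1 < E)
    (hEa : IsLeast {n : ℕ | 0 < n ∧
      ((a : ℤ) ^ n ≡ 1 [ZMOD (c : ℤ)] ∨ (a : ℤ) ^ n ≡ -1 [ZMOD (c : ℤ)])} E)
    (hEb : IsLeast {n : ℕ | 0 < n ∧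
      ((b : ℤ) ^ n ≡ 1 [ZMOD (c : ℤ)] ∨ (b : ℤ) ^ n ≡ -1 [ZMOD (c : ℤ)])} E)
    (x y z X Y Z : ℕ) (hz : 0 < z)
    (hZ : 0 < Z)
    (heq1 : a ^ x + b ^ y = c ^ z) (heq2 : a ^ X + b ^ Y = c ^ Z)
    (Δ : ℕ) (hΔ : Δ = ((x : ℤ) * Y - (X : ℤ) * y).natAbs) :
    E ∣ Δ ∧ ((x % 2 ≠ X % 2 ∨ y % 2 ≠ Y % 2) → Odd (Δ / E)) := by
  have : Fact c.Prime := ⟨hcp⟩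
  have : Fact (2 < c) := ⟨hcp.two_le.lt_of_ne (by rintro rfl; exact absurd hcodd (by decide))⟩
  obtain ⟨t, ht⟩ := ht
  have hA0 : (a : ZMod c) ≠ 0 := ((ZMod.isUnit_iff_coprime a c).mpr hac).ne_zero
  have hB0 : (b : ZMod c) ≠ 0 := ((ZMod.isUnit_iff_coprime b c).mpr hbc).ne_zero
  have h1 := natCast_pow_eq_neg_pow_of_add_eq_pow hz heq1
  have h2 := natCast_pow_eq_neg_pow_of_add_eq_pow hZ heq2
  have hAΔ : (a : ZMod c) ^ Δ = (-1) ^ (y + Y) :=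
    hΔ ▸ pow_natAbs_eq_neg_one_pow_of_eq_neg hA0 h1 h2
  have hBΔ : (b : ZMod c) ^ Δ = (-1) ^ (x + X) := by
    rw [hΔ, show (x : ℤ) * Y - X * y = -((y : ℤ) * X - Y * x) by ring, Int.natAbs_neg]
    exact pow_natAbs_eq_neg_one_pow_of_eq_neg hB0 (by rw [h1, neg_neg]) (by rw [h2, neg_neg])
  have hdvd : E ∣ Δ := by
    rw [eq_orderOf_sq_of_isLeast hac hEa, ← pow_eq_one_or_neg_one_iff_orderOf_sq_dvd, hAΔ]
    exact neg_one_pow_eq_or _ _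
  refine ⟨hdvd, fun hpar => ?_⟩
  obtain ⟨k, rfl⟩ := hdvd
  rw [pow_mul, natCast_pow_eq_neg_one_of_isLeast ht hac hE1 hEa] at hAΔ
  rw [pow_mul, natCast_pow_eq_neg_one_of_isLeast ht hbc hE1 hEb] at hBΔ
  have hy := even_iff_even_of_neg_one_pow_eq ZMod.neg_one_ne_one hAΔ
  have hx := even_iff_even_of_neg_one_pow_eq ZMod.neg_one_ne_one hBΔ
  rw [Nat.mul_div_cancel_left _ (by omega), ← Nat.not_even_iff_odd]
  intro hke
  rw [Nat.even_add] at hx hy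
  simp only [Nat.even_iff] at hx hy hke
  omega

theorem stmt_19 (c : ℕ) (hcp : c.Prime) (hcodd : Odd c)
    (ht : ∃ t : ℕ, c - 1 = 2 ^ t)
    (a b : ℕ) (ha : 1 < a) (hb : 1 < b)
    (hab : Nat.Coprime a b) (hac : Nat.Coprime a c) (hbc : Nat.Coprime b c)
    (E : ℕ) (hE1 : 1 < E)
    (hEa : IsLeast {n : ℕ | 0 < n ∧
      ((a : ℤ) ^ n ≡ 1 [ZMOD (c : ℤ)] ∨ (a : ℤ) ^ n ≡ -1 [ZMOD (c : ℤ)])} E)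
    (hEb : IsLeast {n : ℕ | 0 < n ∧
      ((b : ℤ) ^ n ≡ 1 [ZMOD (c : ℤ)] ∨ (b : ℤ) ^ n ≡ -1 [ZMOD (c : ℤ)])} E)
    (x y z X Y Z : ℕ) (hx : 0 < x) (hy : 0 < y) (hz : 0 < z)
    (hX : 0 < X) (hY : 0 < Y) (hZ : 0 < Z) (hzZ : z ≤ Z)
    (heq1 : a ^ x + b ^ y = c ^ z) (heq2 : a ^ X + b ^ Y = c ^ Z)
    (Δ : ℕ) (hΔ : Δ = ((x : ℤ) * Y - (X : ℤ) * y).natAbs) (hΔ0 : Δ ≠ 0) :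
    E ∣ Δ ∧ ((x % 2 ≠ X % 2 ∨ y % 2 ≠ Y % 2) → Odd (Δ / E)) :=
  stmt_19_general c hcp hcodd ht a b hac hbc E hE1 hEa hEb x y z X Y Z hz hZ heq1 heq2 Δ hΔ
end
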